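/- arXiv:2311.00957 — 6 statements merged into one kernel-verified Lean document; each statement's English description precedes it below -/
import Mathlib

section
/- Let φ₁: ℝ^n → (−∞,+∞] be proper, closed and continuous on dom(φ₁), and let φ₂: ℝ^n → ℝ be real-valued. Define τ(x) := φ₁(x)/φ₂(x) if x ∈ dom(φ₁) and φ₂(x) ≠ 0, and τ(x) := +∞ otherwise. Let x ∈ dom(τ) with a₁ := φ₁(x) > 0 and a₂ := φ₂(x) > 0. If φ₂ is Lipschitz continuous on a neighborhood of x and the Fréchet subdifferential ∂̂φ₂(z) is nonempty for every z in a neighborhood of x, then ∂τ(x) ⊆ (1/a₂)·(∂φ₁(x) − (a₁/a₂)·∂φ₂(x)) (Minkowski sum/difference of sets); in particular, if ∂τ(x) ≠ ∅ then ∂φ₁(x) ≠ ∅. Moreover, this inclusion holds with equality if φ₂ is continuously differentiable at x. -/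
open Filter Topology Set
open scoped RealInnerProductSpace Pointwise NNReal

noncomputable section

namespace Paper

variable {E : Type*} [NormedAddCommGroup E] [InnerProductSpace ℝ E]

/-- The effective domain of an extended-real-valued function. -/
def edom (φ : E → EReal) : Set E := {x | φ x ≠ ⊤}

/-- A function with values in `(-∞, +∞]` is proper if it is not identically `+∞`
and never takes the value `-∞`. -/
def Proper (φ : E → EReal) : Prop := (∃ x, φ x ≠ ⊤) ∧ ∀ x, φ x ≠ ⊥

/-- The Fréchet subdifferential of `φ` at `x`. -/
def frSubdiff (φ : E → EReal) (x : E) : Set E :=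
  {y | φ x ≠ ⊤ ∧ 0 ≤ Filter.liminf
      (fun z : E => (φ z - φ x - ((⟪y, z - x⟫ : ℝ) : EReal)) * ((‖z - x‖⁻¹ : ℝ) : EReal))
      (𝓝[≠] x)}

/-- The limiting (Mordukhovich) subdifferential of `φ` at `x`. -/
def limSubdiff (φ : E → EReal) (x : E) : Set E :=
  {y | ∃ u v : ℕ → E,
      Tendsto u atTop (𝓝 x) ∧ Tendsto (fun k => φ (u k)) atTop (𝓝 (φ x)) ∧
      (∀ k, v k ∈ frSubdiff φ (u k)) ∧ Tendsto v atTop (𝓝 y)}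

/-- The convex subdifferential of a real-valued function. -/
def cvxSubdiff (g : E → ℝ) (x : E) : Set E :=
  {y | ∀ z, g x + ⟪y, z - x⟫ ≤ g z}

/-- The convex subdifferential of an extended-real-valued function. -/
def cvxSubdiffE (φ : E → EReal) (x : E) : Set E :=
  {y | ∀ z, φ x + ((⟪y, z - x⟫ : ℝ) : EReal) ≤ φ z}

/-- The Fenchel conjugate of an extended-real-valued function. -/
def fconjE (φ : E → EReal) : E → EReal :=
  fun y => ⨆ x : E, (((⟪x, y⟫ : ℝ) : EReal) - φ x)

/-- The Fenchel conjugate of a real-valued function. -/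
def fconj (g : E → ℝ) : E → EReal := fconjE (fun x => ((g x : ℝ) : EReal))

/-- `φ` satisfies the calmness condition at `x` relative to `A`. -/
def CalmAt (φ : E → EReal) (x : E) (A : Set E) : Prop :=
  ∃ κ : ℝ, 0 < κ ∧ ∃ B ∈ 𝓝 x, ∀ u ∈ B ∩ A,
    φ u ≤ φ x + ((κ * ‖u - x‖ : ℝ) : EReal) ∧ φ x ≤ φ u + ((κ * ‖u - x‖ : ℝ) : EReal)

/-- `φ` satisfies the calmness condition on `A`. -/
def CalmOn (φ : E → EReal) (A : Set E) : Prop := ∀ x ∈ A, CalmAt φ x A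

/-- The Kurdyka–Łojasiewicz property of `φ` at `x`. -/
def KLAt (φ : E → EReal) (x : E) : Prop :=
  ∃ ε > (0 : ℝ), ∃ δ > (0 : ℝ), ∃ ϕ ϕ' : ℝ → ℝ,
    ϕ 0 = 0 ∧ ContinuousOn ϕ (Set.Ico 0 ε) ∧ ConcaveOn ℝ (Set.Ico 0 ε) ϕ ∧
    (∀ s ∈ Set.Ioo (0 : ℝ) ε, HasDerivAt ϕ (ϕ' s) s) ∧
    ContinuousOn ϕ' (Set.Ioo 0 ε) ∧ (∀ s ∈ Set.Ioo (0 : ℝ) ε, 0 < ϕ' s) ∧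
    ∀ z ∈ Metric.ball x δ, φ x < φ z → φ z < φ x + (ε : EReal) →
      1 ≤ ENNReal.ofReal (ϕ' ((φ z).toReal - (φ x).toReal)) *
        EMetric.infEdist (0 : E) (limSubdiff φ z)

/-- The KL property of `φ` at `x` with exponent `θ`. -/
def KLExpAt (φ : E → EReal) (x : E) (θ : ℝ) : Prop :=
  ∃ c > (0 : ℝ), ∃ ε > (0 : ℝ), ∃ δ > (0 : ℝ),
    ∀ z ∈ Metric.ball x δ, φ x < φ z → φ z < φ x + (ε : EReal) →
      ENNReal.ofReal (c * ((φ z).toReal - (φ x).toReal) ^ θ) ≤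
        EMetric.infEdist (0 : E) (limSubdiff φ z)

/-- The (possibly multivalued) proximity operator of `φ`. -/
def proxSet (φ : E → EReal) (u : E) : Set E :=
  {z | ∀ w, φ z + ((‖z - u‖ ^ 2 / 2 : ℝ) : EReal) ≤ φ w + ((‖w - u‖ ^ 2 / 2 : ℝ) : EReal)}

/-- A positive scaling of an extended-real-valued function. -/
def scaleE (α : ℝ) (φ : E → EReal) : E → EReal := fun x => ((α : ℝ) : EReal) * φ x

/-- `h` is locally Lipschitz differentiable on `s`. -/
def LocLipGradOn [CompleteSpace E] (h : E → ℝ) (s : Set E) : Prop :=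
  (∀ x ∈ s, DifferentiableAt ℝ h x) ∧
  ∀ x ∈ s, ∃ U ∈ 𝓝 x, ∃ L : ℝ, ∀ u ∈ U ∩ s, ∀ v ∈ U ∩ s,
    ‖gradient h u - gradient h v‖ ≤ L * ‖u - v‖

/-- The numerator `ζ = f + h`. -/
def zeta (f : E → EReal) (h : E → ℝ) (x : E) : EReal := f x + ((h x : ℝ) : EReal)

/-- `η(x,y) = ⟨x,y⟩ − g^*(y)`. -/
def eta (g : E → ℝ) (x y : E) : EReal := ((⟪x, y⟫ : ℝ) : EReal) - fconj g y

/-- The extended objective of the fractional problem. -/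
def Ffun (f : E → EReal) (g h : E → ℝ) (x : E) : EReal :=
  if g x ≠ 0 ∧ f x ≠ ⊤ then ((((f x).toReal + h x) / g x : ℝ) : EReal) else ⊤

/-- The extended objective of the reformulated problem. -/
def Qfun (f : E → EReal) (g h : E → ℝ) (x y : E) : EReal :=
  if f x ≠ ⊤ ∧ 0 < eta g x y then
    ((((f x).toReal + h x) / (eta g x y).toReal : ℝ) : EReal) else ⊤

/-- Pack a pair into the `ℓ²` product space. -/
def mk2 (x y : E) : WithLp 2 (E × E) := (WithLp.equiv 2 (E × E)).symm (x, y)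

def pr1 (p : WithLp 2 (E × E)) : E := (WithLp.equiv 2 (E × E) p).1

def pr2 (p : WithLp 2 (E × E)) : E := (WithLp.equiv 2 (E × E) p).2

/-- `Q` as a function on the `ℓ²` product space. -/
def Qpair (f : E → EReal) (g h : E → ℝ) (p : WithLp 2 (E × E)) : EReal :=
  Qfun f g h (pr1 p) (pr2 p)

/-- The blanket assumptions of the paper. -/
structure Blanket [CompleteSpace E] (f : E → EReal) (g h : E → ℝ) : Prop where
  f_proper : Proper f
  f_lsc : LowerSemicontinuous f
  f_cont : ContinuousOn f (edom f)
  f_bddBelow : ∃ m : ℝ, ∀ x, (m : EReal) ≤ f x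
  h_lsc : LowerSemicontinuous h
  h_diff : LocLipGradOn h {x | g x ≠ 0}
  g_convex : ConvexOn ℝ Set.univ g
  g_nonneg : ∀ x, 0 ≤ g x
  omega_nonempty : ∃ x, g x ≠ 0
  zeta_nonneg : ∀ x, f x ≠ ⊤ → 0 ≤ zeta f h x

/-- `x` is a critical point of `F`: `0 ∈ ∂̂f(x) + ∇h(x) − F(x)·∂g(x)`. -/
def IsCritF [CompleteSpace E] (f : E → EReal) (g h : E → ℝ) (x : E) : Prop :=
  g x ≠ 0 ∧ f x ≠ ⊤ ∧
  ∃ u ∈ frSubdiff f x, ∃ v ∈ cvxSubdiff g x,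
    u + gradient h x - (Ffun f g h x).toReal • v = 0

/-- The level set `X = {x : F(x) ≤ F(x⁰)}`. -/
def lvlSet (f : E → EReal) (g h : E → ℝ) (x0 : E) : Set E :=
  {x | Ffun f g h x ≤ Ffun f g h x0}

/-- The enlargement `X_{α̲}` of the level set. -/
def Xal (f : E → EReal) (g h : E → ℝ) (x0 : E) (αl : ℝ) : Set E :=
  {z | (Metric.infDist z (lvlSet f g h x0)) ^ 2 ≤ sSup (g '' lvlSet f g h x0) / αl}

/-- The compact set `𝒴 = ∪_{z ∈ X_{α̲}} ∂g(z)`. -/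
def Yset (f : E → EReal) (g h : E → ℝ) (x0 : E) (αl : ℝ) : Set E :=
  ⋃ z ∈ Xal f g h x0 αl, cvxSubdiff g z

/-- The set `S = {(x,y) ∈ X × 𝒴 : η(x,y) > 0}`. -/
def Sset (f : E → EReal) (g h : E → ℝ) (x0 : E) (αl : ℝ) : Set (E × E) :=
  {p | p.1 ∈ lvlSet f g h x0 ∧ p.2 ∈ Yset f g h x0 αl ∧ 0 < eta g p.1 p.2}

/-- The set of accumulation points of a sequence. -/
def accSet {X : Type*} [TopologicalSpace X] (pt : ℕ → X) : Set X :=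
  {p | ∃ σ : ℕ → ℕ, StrictMono σ ∧ Tendsto (pt ∘ σ) atTop (𝓝 p)}

/-- A polyhedral function: its epigraph is a finite intersection of closed half-spaces. -/
def IsPolyhedralFn (φ : E → EReal) : Prop :=
  ∃ (m : ℕ) (w : Fin m → E) (c b : Fin m → ℝ),
    ∀ (x : E) (a : ℝ), (φ x ≤ (a : EReal) ↔ ∀ i, ⟪w i, x⟫ + c i * a ≤ b i)

/-- The quotient function `τ = φ₁/φ₂`. -/
def tau (φ₁ : E → EReal) (φ₂ : E → ℝ) (x : E) : EReal :=
  if φ₁ x ≠ ⊤ ∧ φ₂ x ≠ 0 then (((φ₁ x).toReal / φ₂ x : ℝ) : EReal) else ⊤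

/-!
Write `φ₁ = φ₂ τ`. If `y ∈ ∂̂τ(z)` and `w ∈ ∂̂φ₂(z)`, expanding `φ₁ = φ₂ τ` around `z` shows
`φ₂(z) y + τ(z) w ∈ ∂̂φ₁(z)`; since only lower first-order estimates are available for `φ₂`,
this product rule needs `τ ≥ 0` near `z`, which holds near `x` because `φ₁(x), φ₂(x) > 0` and
`φ₁` is lower semicontinuous. Along a sequence `zₖ → x` realising a limiting subgradient of `τ`,
the chosen `wₖ ∈ ∂̂φ₂(zₖ)` are bounded by the Lipschitz constant of `φ₂`, so a subsequence
converges to some `w ∈ ∂φ₂(x)`, and passing to the limit gives the inclusion. If `φ₂` is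
differentiable near `x` with gradient continuous at `x`, then `∂φ₂(x) = {∇φ₂(x)}` and the
Fréchet quotient rule also runs backwards, which gives equality.
-/

open Asymptotics

section IsLittleOBelow

variable {α F : Type*} [SeminormedAddGroup F] {l l' : Filter α} {f g : α → ℝ} {r : α → F}

def IsLittleOBelow (l : Filter α) (f : α → ℝ) (r : α → F) : Prop :=
  ∀ ε : ℝ, 0 < ε → ∀ᶠ w in l, -(ε * ‖r w‖) ≤ f w

theorem IsLittleOBelow.of_isLittleO (h : f =o[l] r) : IsLittleOBelow l f r := fun _ hε =>
  (h.def hε).mono fun _ hw => neg_le_of_abs_le hw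

theorem IsLittleOBelow.mono (h : IsLittleOBelow l f r) (hl : l' ≤ l) : IsLittleOBelow l' f r :=
  fun ε hε => (h ε hε).filter_mono hl

theorem IsLittleOBelow.congr_le (h : IsLittleOBelow l f r) (hfg : f ≤ᶠ[l] g) :
    IsLittleOBelow l g r :=
  fun ε hε => (h ε hε).mp (hfg.mono fun _ hw h' => h'.trans hw)

theorem IsLittleOBelow.add (hf : IsLittleOBelow l f r) (hg : IsLittleOBelow l g r) :
    IsLittleOBelow l (fun w => f w + g w) r := fun ε hε => by
  filter_upwards [hf (ε / 2) (by positivity), hg (ε / 2) (by positivity)] with w h₁ h₂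
  linarith

theorem IsLittleOBelow.nonneg_mul {c : α → ℝ} {C : ℝ} (h : IsLittleOBelow l f r)
    (hc : Tendsto c l (𝓝 C)) (hc₀ : ∀ᶠ w in l, 0 ≤ c w) :
    IsLittleOBelow l (fun w => c w * f w) r := fun ε hε => by
  filter_upwards [h (ε / (|C| + 1)) (by positivity), hc₀,
    hc.eventually (eventually_lt_nhds ((le_abs_self C).trans_lt (lt_add_one _)))]
    with w hfw hcw₀ hcw
  calc -(ε * ‖r w‖) = (|C| + 1) * -(ε / (|C| + 1) * ‖r w‖) := by field_simp
    _ ≤ c w * -(ε / (|C| + 1) * ‖r w‖) :=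
      mul_le_mul_of_nonpos_right hcw.le (neg_nonpos.2 (by positivity))
    _ ≤ c w * f w := mul_le_mul_of_nonneg_left hfw hcw₀

end IsLittleOBelow

theorem isLittleO_mul_inner {α : Type*} {l : Filter α} {c : α → ℝ} (hc : Tendsto c l (𝓝 0))
    (a : E) (u : α → E) : (fun w => c w * ⟪a, u w⟫) =o[l] u := by
  have hO : (fun w => ⟪a, u w⟫) =O[l] u :=
    IsBigO.of_bound ‖a‖ (Eventually.of_forall fun w => by
      simpa using abs_real_inner_le_norm a (u w))
  simpa using ((isLittleO_one_iff ℝ).2 hc).smul_isBigO hO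

theorem norm_le_of_isLittleOBelow {K : ℝ} (hK : 0 ≤ K) {z y : E}
    (h : IsLittleOBelow (𝓝 z) (fun w => K * ‖w - z‖ - ⟪y, w - z⟫) fun w => w - z) :
    ‖y‖ ≤ K := by
  refine le_of_forall_pos_le_add fun ε hε => ?_
  rcases eq_or_ne y 0 with rfl | hy
  · simpa using add_nonneg hK hε.le
  have hray : Tendsto (fun t : ℝ => z + t • y) (𝓝[>] 0) (𝓝 z) := by
    simpa using ((tendsto_id.smul_const y).const_add z).mono_left
      (nhdsWithin_le_nhds (a := (0 : ℝ)))
  obtain ⟨t, hεt, ht⟩ := ((hray.eventually (h ε hε)).and self_mem_nhdsWithin).exists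
  have ht : 0 < t := ht
  have hty : 0 < t * ‖y‖ := mul_pos ht (norm_pos_iff.2 hy)
  simp only [add_sub_cancel_left, norm_smul, Real.norm_of_nonneg ht.le, real_inner_smul_right,
    real_inner_self_eq_norm_sq] at hεt
  nlinarith

theorem EReal.zero_le_liminf_iff {α : Type*} {l : Filter α} {F : α → EReal} :
    0 ≤ liminf F l ↔ ∀ ε : ℝ, 0 < ε → ∀ᶠ w in l, ((-ε : ℝ) : EReal) < F w := by
  rw [le_liminf_iff]
  refine ⟨fun h ε hε => h _ (by exact_mod_cast neg_neg_of_pos hε), fun h b hb => ?_⟩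
  obtain ⟨x, hbx, hx⟩ := EReal.lt_iff_exists_real_btwn.1 hb
  exact (h (-x) (neg_pos.2 (by exact_mod_cast hx))).mono fun w hw => hbx.trans (by simpa using hw)

theorem EReal.tendsto_nhds_iff_toReal {α : Type*} {l : Filter α} {f : α → EReal} {b : EReal}
    (hf : ∀ k, f k ≠ ⊥) (hb : b ≠ ⊤) (hb' : b ≠ ⊥) :
    Tendsto f l (𝓝 b) ↔ (∀ᶠ k in l, f k ≠ ⊤) ∧ Tendsto (fun k => (f k).toReal) l (𝓝 b.toReal) := by
  refine ⟨fun h => ⟨h.eventually (eventually_ne_nhds hb), (EReal.tendsto_toReal hb hb').comp h⟩,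
    fun ⟨hfin, h⟩ => ?_⟩
  rw [← EReal.coe_toReal hb hb']
  exact (EReal.tendsto_coe.2 h).congr' (hfin.mono fun k hk => EReal.coe_toReal hk (hf k))

theorem mem_frSubdiff_iff {ψ : E → EReal} (hbot : ∀ w, ψ w ≠ ⊥) {z y : E} (hz : ψ z ≠ ⊤) :
    y ∈ frSubdiff ψ z ↔ IsLittleOBelow (𝓝[edom ψ] z)
      (fun w => (ψ w).toReal - (ψ z).toReal - ⟪y, w - z⟫) fun w => w - z := by
  set f : E → ℝ := fun w => (ψ w).toReal - (ψ z).toReal - ⟪y, w - z⟫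
  have hquot : ∀ w, w ≠ z → ∀ ε : ℝ,
      (((-ε : ℝ) : EReal) < (ψ w - ψ z - ((⟪y, w - z⟫ : ℝ) : EReal)) * ((‖w - z‖⁻¹ : ℝ) : EReal) ↔
        (ψ w ≠ ⊤ → -(ε * ‖w - z‖) < f w)) := by
    intro w hw ε
    have hd : 0 < ‖w - z‖ := norm_pos_iff.2 (sub_ne_zero.2 hw)
    rw [← EReal.coe_toReal hz (hbot z)]
    by_cases hψ : ψ w = ⊤
    · simpa [hψ, EReal.top_mul_coe_of_pos (inv_pos.2 hd)] using EReal.coe_lt_top (-ε)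
    · rw [← EReal.coe_toReal hψ (hbot w)]
      norm_cast
      rw [← div_eq_mul_inv, lt_div_iff₀ hd]
      simp [f]
  simp only [frSubdiff, mem_ofPred_eq, hz, ne_eq, not_false_eq_true, true_and,
    EReal.zero_le_liminf_iff, IsLittleOBelow, eventually_nhdsWithin_iff, mem_compl_singleton_iff]
  constructor
  · intro h ε hε
    filter_upwards [h ε hε] with w hw hwψ
    rcases eq_or_ne w z with rfl | hwz
    · simp [f]
    · exact ((hquot w hwz ε).1 (hw hwz) hwψ).le
  · intro h ε hε
    filter_upwards [h (ε / 2) (half_pos hε)] with w hw hwz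
    refine (hquot w hwz ε).2 fun hwψ => ?_
    have hd : 0 < ‖w - z‖ := norm_pos_iff.2 (sub_ne_zero.2 hwz)
    nlinarith [hw hwψ]

theorem mem_frSubdiff_coe_iff {g : E → ℝ} {z y : E} :
    y ∈ frSubdiff (fun w => (g w : EReal)) z ↔
      IsLittleOBelow (𝓝 z) (fun w => g w - g z - ⟪y, w - z⟫) fun w => w - z := by
  rw [mem_frSubdiff_iff (fun w => EReal.coe_ne_bot _) (EReal.coe_ne_top _)]
  simp [edom]

theorem mem_frSubdiff_of_hasGradientAt [CompleteSpace E] {g : E → ℝ} {z g' : E}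
    (h : HasGradientAt g g' z) : g' ∈ frSubdiff (fun w => (g w : EReal)) z :=
  mem_frSubdiff_coe_iff.2 (.of_isLittleO (hasGradientAt_iff_isLittleO.1 h))

theorem eq_of_hasGradientAt_of_mem_frSubdiff [CompleteSpace E] {g : E → ℝ} {z g' y : E}
    (h : HasGradientAt g g' z) (hy : y ∈ frSubdiff (fun w => (g w : EReal)) z) : y = g' := by
  have hlow := (mem_frSubdiff_coe_iff.1 hy).add
    (.of_isLittleO (hasGradientAt_iff_isLittleO.1 h).neg_left)
  have hnorm : ‖y - g'‖ ≤ 0 := norm_le_of_isLittleOBelow le_rfl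
    (hlow.congr_le (Eventually.of_forall fun w => by
      simp only [inner_sub_left]
      linarith))
  exact sub_eq_zero.1 (norm_le_zero_iff.1 hnorm)

theorem norm_le_of_mem_frSubdiff_of_lipschitzOnWith {g : E → ℝ} {U : Set E} {K : ℝ≥0} {z y : E}
    (hU : U ∈ 𝓝 z) (hK : LipschitzOnWith K g U)
    (hy : y ∈ frSubdiff (fun w => (g w : EReal)) z) : ‖y‖ ≤ K := by
  refine norm_le_of_isLittleOBelow K.coe_nonneg ((mem_frSubdiff_coe_iff.1 hy).congr_le ?_)
  filter_upwards [hU] with w hw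
  have := hK.dist_le_mul w hw z (mem_of_mem_nhds hU)
  rw [Real.dist_eq, dist_eq_norm] at this
  linarith [le_abs_self (g w - g z)]

/-- Off `edom (tau φ₁ φ₂)` both sides are junk zeros: `⊤.toReal = 0` and `a / 0 = 0`. -/
theorem tau_toReal {X : Type*} (φ₁ : X → EReal) (φ₂ : X → ℝ) (w : X) :
    (tau φ₁ φ₂ w).toReal = (φ₁ w).toReal / φ₂ w := by
  unfold tau
  split_ifs with h
  · simp
  · rcases not_and_or.1 h with h | h <;> simp_all

theorem tau_ne_bot {X : Type*} (φ₁ : X → EReal) (φ₂ : X → ℝ) (w : X) : tau φ₁ φ₂ w ≠ ⊥ := by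
  unfold tau
  split_ifs <;> simp

theorem edom_tau {X : Type*} (φ₁ : X → EReal) (φ₂ : X → ℝ) :
    edom (tau φ₁ φ₂) = edom φ₁ ∩ {w | φ₂ w ≠ 0} := by
  ext w
  simp only [edom, tau, mem_inter_iff, mem_ofPred_eq]
  split_ifs with h <;> simp [h]

theorem tendsto_tau_iff {X α : Type*} {φ₁ : X → EReal} {φ₂ : X → ℝ} {l : Filter α} {u : α → X}
    {x : X} (hbot : ∀ w, φ₁ w ≠ ⊥) (hx₁ : φ₁ x ≠ ⊤) (hx₂ : φ₂ x ≠ 0)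
    (h₂ : Tendsto (fun k => φ₂ (u k)) l (𝓝 (φ₂ x))) :
    Tendsto (fun k => tau φ₁ φ₂ (u k)) l (𝓝 (tau φ₁ φ₂ x)) ↔
      Tendsto (fun k => φ₁ (u k)) l (𝓝 (φ₁ x)) := by
  have hdom : ∀ w, φ₂ w ≠ 0 → (tau φ₁ φ₂ w ≠ ⊤ ↔ φ₁ w ≠ ⊤) := fun w hw => by
    change w ∈ edom (tau φ₁ φ₂) ↔ w ∈ edom φ₁
    simp [edom_tau, hw]
  have hne : ∀ᶠ k in l, φ₂ (u k) ≠ 0 := h₂.eventually (eventually_ne_nhds hx₂)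
  rw [EReal.tendsto_nhds_iff_toReal (fun k => tau_ne_bot φ₁ φ₂ _) ((hdom x hx₂).2 hx₁)
    (tau_ne_bot φ₁ φ₂ x), EReal.tendsto_nhds_iff_toReal (fun k => hbot _) hx₁ (hbot x)]
  simp only [tau_toReal]
  refine and_congr (eventually_congr (hne.mono fun k hk => hdom _ hk))
    ⟨fun h => ?_, fun h => h.div h₂ hx₂⟩
  simpa [div_mul_cancel₀ _ hx₂] using
    (h.mul h₂).congr' (hne.mono fun k hk => div_mul_cancel₀ _ hk)

section Quotient

variable {φ₁ : E → EReal} {φ₂ : E → ℝ}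

theorem mem_frSubdiff_tau_iff {z y : E} (hz : φ₁ z ≠ ⊤)
    (hφ₂ : ∀ᶠ w in 𝓝 z, φ₂ w ≠ 0) :
    y ∈ frSubdiff (tau φ₁ φ₂) z ↔ IsLittleOBelow (𝓝[edom φ₁] z)
      (fun w => (φ₁ w).toReal / φ₂ w - (φ₁ z).toReal / φ₂ z - ⟪y, w - z⟫) fun w => w - z := by
  have hτz : tau φ₁ φ₂ z ≠ ⊤ := by
    rw [tau, if_pos ⟨hz, hφ₂.self_of_nhds⟩]
    exact EReal.coe_ne_top _
  rw [mem_frSubdiff_iff (tau_ne_bot φ₁ φ₂) hτz, edom_tau,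
    nhdsWithin_inter_of_mem' (mem_nhdsWithin_of_mem_nhds hφ₂)]
  simp only [tau_toReal]

theorem mem_frSubdiff_of_mem_frSubdiff_tau (hbot : ∀ w, φ₁ w ≠ ⊥) {z y w : E}
    (hpos : ∀ᶠ v in 𝓝 z, 0 < φ₂ v ∧ 0 ≤ φ₁ v)
    (hφ₁ : ContinuousWithinAt φ₁ (edom φ₁) z) (hφ₂ : ContinuousAt φ₂ z)
    (hy : y ∈ frSubdiff (tau φ₁ φ₂) z) (hw : w ∈ frSubdiff (fun v => (φ₂ v : EReal)) z) :
    φ₂ z • y + ((φ₁ z).toReal / φ₂ z) • w ∈ frSubdiff φ₁ z := by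
  have hz : z ∈ edom φ₁ ∩ {v | φ₂ v ≠ 0} := edom_tau φ₁ φ₂ ▸ hy.1
  set t := (φ₁ z).toReal / φ₂ z
  have hpos' : ∀ᶠ v in 𝓝[edom φ₁] z, 0 < φ₂ v ∧ 0 ≤ φ₁ v := hpos.filter_mono nhdsWithin_le_nhds
  have hquot : ∀ᶠ v in 𝓝[edom φ₁] z, 0 ≤ (φ₁ v).toReal / φ₂ v :=
    hpos'.mono fun v hv => div_nonneg (EReal.toReal_nonneg hv.2) hv.1.le
  have hτ : Tendsto (fun v => (φ₁ v).toReal / φ₂ v) (𝓝[edom φ₁] z) (𝓝 t) :=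
    ((EReal.tendsto_toReal hz.1 (hbot z)).comp hφ₁).div
      (hφ₂.tendsto.mono_left nhdsWithin_le_nhds) hz.2
  have hX := (mem_frSubdiff_tau_iff hz.1 (hpos.mono fun v hv => hv.1.ne')).1 hy
  have hY := (mem_frSubdiff_coe_iff.1 hw).mono (nhdsWithin_le_nhds (s := edom φ₁))
  have hZ := isLittleO_mul_inner (tendsto_sub_nhds_zero_iff.2 hτ) w fun v => v - z
  rw [mem_frSubdiff_iff hbot hz.1]
  -- primes mark values at `v`, `τ' = φ₁' / φ₂'`: `φ₁' - φ₁ - ⟪φ₂ y + t w, ·⟫`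
  -- `= φ₂ (τ' - t - ⟪y, ·⟫) + τ' (φ₂' - φ₂ - ⟪w, ·⟫) + (τ' - t) ⟪w, ·⟫`
  refine (((hX.nonneg_mul tendsto_const_nhds (.of_forall fun _ => (hpos.self_of_nhds).1.le)).add
    (hY.nonneg_mul hτ hquot)).add (.of_isLittleO hZ)).congr_le (hpos'.mono fun v hv => ?_)
  have hv₂ := hv.1.ne'
  have hz₂ : φ₂ z ≠ 0 := hz.2
  simp only [t, inner_add_left, real_inner_smul_left]
  refine le_of_eq ?_
  field_simp
  ring

theorem mem_frSubdiff_tau_of_hasGradientAt [CompleteSpace E] (hbot : ∀ w, φ₁ w ≠ ⊥)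
    {z u g' : E} (hz₂ : 0 < φ₂ z) (hg' : HasGradientAt φ₂ g' z) (hu : u ∈ frSubdiff φ₁ z) :
    (φ₂ z)⁻¹ • (u - ((φ₁ z).toReal / φ₂ z) • g') ∈ frSubdiff (tau φ₁ φ₂) z := by
  set t := (φ₁ z).toReal / φ₂ z
  have hpos : ∀ᶠ v in 𝓝 z, 0 < φ₂ v := hg'.continuousAt.eventually (lt_mem_nhds hz₂)
  have hpos' : ∀ᶠ v in 𝓝[edom φ₁] z, 0 < φ₂ v := hpos.filter_mono nhdsWithin_le_nhds
  have hinv : Tendsto (fun v => (φ₂ v)⁻¹) (𝓝[edom φ₁] z) (𝓝 (φ₂ z)⁻¹) :=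
    (hg'.continuousAt.tendsto.inv₀ hz₂.ne').mono_left nhdsWithin_le_nhds
  have hA := (mem_frSubdiff_iff hbot hu.1).1 hu
  have hB : (fun v => -(t * (φ₂ v)⁻¹) * (φ₂ v - φ₂ z - ⟪g', v - z⟫)) =o[𝓝[edom φ₁] z]
      fun v => v - z := by
    simpa using ((hinv.const_mul t).isBigO_one ℝ).smul_isLittleO
      ((hasGradientAt_iff_isLittleO.1 hg').mono (nhdsWithin_le_nhds (s := edom φ₁)))
  have hC := isLittleO_mul_inner (tendsto_sub_nhds_zero_iff.2 hinv) (u - t • g') fun v => v - z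
  rw [mem_frSubdiff_tau_iff hu.1 (hpos.mono fun v hv => hv.ne')]
  -- primes mark values at `v`, `τ' = φ₁' / φ₂'`:
  -- `τ' - t - ⟪y, ·⟫ = (φ₁' - φ₁ - ⟪u, ·⟫) / φ₂' - t (φ₂' - φ₂ - ⟪g', ·⟫) / φ₂'`
  -- `+ (1 / φ₂' - 1 / φ₂) ⟪u - t g', ·⟫`
  refine (((hA.nonneg_mul hinv (hpos'.mono fun v hv => (inv_pos.2 hv).le)).add
    (.of_isLittleO hB)).add (.of_isLittleO hC)).congr_le
    (hpos'.mono fun v hv => ?_)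
  have hv₂ := hv.ne'
  have hz₂' := hz₂.ne'
  simp only [t, inner_sub_left, real_inner_smul_left]
  refine le_of_eq ?_
  field_simp
  ring

end Quotient

theorem mem_limSubdiff_of_eventually {φ : E → EReal} {x y : E} {u v : ℕ → E}
    (hu : Tendsto u atTop (𝓝 x)) (hφu : Tendsto (fun k => φ (u k)) atTop (𝓝 (φ x)))
    (hv : ∀ᶠ k in atTop, v k ∈ frSubdiff φ (u k)) (hvy : Tendsto v atTop (𝓝 y)) :
    y ∈ limSubdiff φ x := by
  obtain ⟨N, hN⟩ := eventually_atTop.1 hv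
  have hshift := tendsto_add_atTop_nat N
  exact ⟨fun k => u (k + N), fun k => v (k + N), hu.comp hshift, hφu.comp hshift,
    fun k => hN _ (Nat.le_add_left N k), hvy.comp hshift⟩

theorem exists_tendsto_subseq_mem_limSubdiff [ProperSpace E] {g : E → ℝ} {U : Set E} {K : ℝ≥0}
    {x : E} {u : ℕ → E} (hU : U ∈ 𝓝 x) (hK : LipschitzOnWith K g U) (hu : Tendsto u atTop (𝓝 x))
    (hfr : ∀ᶠ k in atTop, (frSubdiff (fun w => (g w : EReal)) (u k)).Nonempty) :
    ∃ w : ℕ → E, (∀ᶠ k in atTop, w k ∈ frSubdiff (fun w => (g w : EReal)) (u k)) ∧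
      ∃ σ : ℕ → ℕ, StrictMono σ ∧ ∃ w₀ ∈ limSubdiff (fun w => (g w : EReal)) x,
        Tendsto (w ∘ σ) atTop (𝓝 w₀) := by
  classical
  let w k := if h : (frSubdiff (fun w => (g w : EReal)) (u k)).Nonempty then h.some else 0
  have hw : ∀ᶠ k in atTop, w k ∈ frSubdiff (fun w => (g w : EReal)) (u k) :=
    hfr.mono fun k hk => by simpa only [w, dif_pos hk] using hk.some_mem
  have hbdd : ∀ᶠ k in atTop, w k ∈ Metric.closedBall (0 : E) K := by
    filter_upwards [hw, hu.eventually (eventually_mem_nhds_iff.2 hU)] with k hk hUk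
    simpa using norm_le_of_mem_frSubdiff_of_lipschitzOnWith hUk hK hk
  obtain ⟨w₀, -, σ, hσ, hwσ⟩ :=
    tendsto_subseq_of_frequently_bounded Metric.isBounded_closedBall hbdd.frequently
  have hg : ContinuousAt g x := hK.continuousOn.continuousAt hU
  refine ⟨w, hw, σ, hσ, w₀, mem_limSubdiff_of_eventually (hu.comp hσ.tendsto_atTop) ?_
    (hσ.tendsto_atTop.eventually hw) hwσ, hwσ⟩
  exact EReal.tendsto_coe.2 (hg.tendsto.comp (hu.comp hσ.tendsto_atTop))

theorem limSubdiff_coe_eq_singleton_gradient [CompleteSpace E] {g : E → ℝ} {x : E}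
    (hd : ∀ᶠ z in 𝓝 x, DifferentiableAt ℝ g z) (hc : ContinuousAt (gradient g) x) :
    limSubdiff (fun w => (g w : EReal)) x = {gradient g x} := by
  refine Subset.antisymm ?_ fun y hy => ?_
  · rintro y ⟨u, v, hu, -, hv, hvy⟩
    have hgrad : ∀ᶠ k in atTop, gradient g (u k) = v k := (hu.eventually hd).mono fun k hk =>
      (eq_of_hasGradientAt_of_mem_frSubdiff hk.hasGradientAt (hv k)).symm
    exact tendsto_nhds_unique hvy ((hc.tendsto.comp hu).congr' hgrad)
  · rw [mem_singleton_iff.1 hy]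
    exact ⟨fun _ => x, fun _ => gradient g x, tendsto_const_nhds, tendsto_const_nhds,
      fun _ => mem_frSubdiff_of_hasGradientAt hd.self_of_nhds.hasGradientAt, tendsto_const_nhds⟩

section LimitingQuotientRule

variable {φ₁ : E → EReal} {φ₂ : E → ℝ} {x : E}

theorem limSubdiff_tau_subset [ProperSpace E] {U : Set E} {K : ℝ≥0} (hbot : ∀ w, φ₁ w ≠ ⊥)
    (hφ₁ : ContinuousOn φ₁ (edom φ₁)) (hx : φ₁ x ≠ ⊤) (hpos : ∀ᶠ v in 𝓝 x, 0 < φ₂ v ∧ 0 ≤ φ₁ v)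
    (hU : U ∈ 𝓝 x) (hK : LipschitzOnWith K φ₂ U)
    (hfr : ∀ᶠ z in 𝓝 x, (frSubdiff (fun w => (φ₂ w : EReal)) z).Nonempty) :
    limSubdiff (tau φ₁ φ₂) x ⊆ (φ₂ x)⁻¹ • (limSubdiff φ₁ x -
      ((φ₁ x).toReal / φ₂ x) • limSubdiff (fun w => (φ₂ w : EReal)) x) := by
  rintro y ⟨u, v, hu, hτu, hv, hvy⟩
  have hx₂ : 0 < φ₂ x := hpos.self_of_nhds.1
  have hφ₂ : ∀ᶠ z in 𝓝 x, ContinuousAt φ₂ z :=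
    (eventually_mem_nhds_iff.2 hU).mono fun _ hz => hK.continuousOn.continuousAt hz
  obtain ⟨w, hw, σ, hσ, w₀, hw₀, hwσ⟩ :=
    exists_tendsto_subseq_mem_limSubdiff hU hK hu (hu.eventually hfr)
  have hφ₂u : Tendsto (fun k => φ₂ (u k)) atTop (𝓝 (φ₂ x)) := hφ₂.self_of_nhds.tendsto.comp hu
  have hφ₁u := (tendsto_tau_iff hbot hx hx₂.ne' hφ₂u).1 hτu
  have hτ : Tendsto (fun k => (φ₁ (u k)).toReal / φ₂ (u k)) atTop
      (𝓝 ((φ₁ x).toReal / φ₂ x)) :=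
    ((EReal.tendsto_toReal hx (hbot x)).comp hφ₁u).div hφ₂u hx₂.ne'
  have hmem : ∀ᶠ k in atTop, φ₂ (u k) • v k + ((φ₁ (u k)).toReal / φ₂ (u k)) • w k ∈
      frSubdiff φ₁ (u k) := by
    filter_upwards [hw, hu.eventually (hpos.eventually_nhds.and hφ₂)] with k hwk ⟨hposk, hφ₂k⟩
    have hk : u k ∈ edom φ₁ ∩ {v | φ₂ v ≠ 0} := edom_tau φ₁ φ₂ ▸ (hv k).1
    exact mem_frSubdiff_of_mem_frSubdiff_tau hbot hposk (hφ₁ _ hk.1) hφ₂k (hv k) hwk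
  have hσ' := hσ.tendsto_atTop
  have hlim : φ₂ x • y + ((φ₁ x).toReal / φ₂ x) • w₀ ∈ limSubdiff φ₁ x :=
    mem_limSubdiff_of_eventually (hu.comp hσ') (hφ₁u.comp hσ') (hσ'.eventually hmem)
      (((hφ₂u.comp hσ').smul (hvy.comp hσ')).add ((hτ.comp hσ').smul hwσ))
  refine ⟨_, sub_mem_sub hlim (smul_mem_smul_set hw₀), ?_⟩
  simp [inv_smul_smul₀ hx₂.ne']

theorem smul_sub_mem_limSubdiff_tau [CompleteSpace E] {u : E} (hbot : ∀ w, φ₁ w ≠ ⊥)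
    (hx : φ₁ x ≠ ⊤) (hx₂ : 0 < φ₂ x) (hd : ∀ᶠ z in 𝓝 x, DifferentiableAt ℝ φ₂ z)
    (hc : ContinuousAt (gradient φ₂) x) (hu : u ∈ limSubdiff φ₁ x) :
    (φ₂ x)⁻¹ • (u - ((φ₁ x).toReal / φ₂ x) • gradient φ₂ x) ∈ limSubdiff (tau φ₁ φ₂) x := by
  obtain ⟨us, vs, hus, hφ₁us, hvs, hvsu⟩ := hu
  have hφ₂ : ContinuousAt φ₂ x := hd.self_of_nhds.continuousAt
  have hφ₂us := hφ₂.tendsto.comp hus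
  have hτ := ((EReal.tendsto_toReal hx (hbot x)).comp hφ₁us).div hφ₂us hx₂.ne'
  refine mem_limSubdiff_of_eventually hus ((tendsto_tau_iff hbot hx hx₂.ne' hφ₂us).2 hφ₁us)
    (v := fun k => (φ₂ (us k))⁻¹ •
      (vs k - ((φ₁ (us k)).toReal / φ₂ (us k)) • gradient φ₂ (us k))) ?_
    ((hφ₂us.inv₀ hx₂.ne').smul (hvsu.sub (hτ.smul (hc.tendsto.comp hus))))
  filter_upwards [hus.eventually (hd.and (hφ₂.eventually (lt_mem_nhds hx₂)))] with k ⟨hdk, hposk⟩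
  exact mem_frSubdiff_tau_of_hasGradientAt hbot hposk hdk.hasGradientAt (hvs k)

end LimitingQuotientRule

theorem statement0_general {n : ℕ} (φ₁ : EuclideanSpace ℝ (Fin n) → EReal)
    (φ₂ : EuclideanSpace ℝ (Fin n) → ℝ)
    (hproper : Proper φ₁) (hclosed : LowerSemicontinuous φ₁)
    (hcont : ContinuousOn φ₁ (edom φ₁))
    (x : EuclideanSpace ℝ (Fin n))
    (hx₁ : φ₁ x ≠ ⊤)
    (ha₁ : (0 : EReal) < φ₁ x) (ha₂ : 0 < φ₂ x)
    (hlip : ∃ U ∈ 𝓝 x, ∃ K : ℝ≥0, LipschitzOnWith K φ₂ U)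
    (hfr : ∀ᶠ z in 𝓝 x, (frSubdiff (fun w => ((φ₂ w : ℝ) : EReal)) z).Nonempty) :
    (limSubdiff (tau φ₁ φ₂) x ⊆
        (φ₂ x)⁻¹ • (limSubdiff φ₁ x -
          ((φ₁ x).toReal / φ₂ x) • limSubdiff (fun w => ((φ₂ w : ℝ) : EReal)) x) ∧
      ((limSubdiff (tau φ₁ φ₂) x).Nonempty → (limSubdiff φ₁ x).Nonempty)) ∧
    (((∀ᶠ z in 𝓝 x, DifferentiableAt ℝ φ₂ z) ∧ ContinuousAt (gradient φ₂) x) →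
      limSubdiff (tau φ₁ φ₂) x =
        (φ₂ x)⁻¹ • (limSubdiff φ₁ x -
          ((φ₁ x).toReal / φ₂ x) • limSubdiff (fun w => ((φ₂ w : ℝ) : EReal)) x)) := by
  obtain ⟨U, hU, K, hK⟩ := hlip
  have hpos : ∀ᶠ v in 𝓝 x, 0 < φ₂ v ∧ 0 ≤ φ₁ v :=
    ((hK.continuousOn.continuousAt hU).eventually (lt_mem_nhds ha₂)).and
      ((hclosed x 0 ha₁).mono fun _ h => h.le)
  have hsub := limSubdiff_tau_subset hproper.2 hcont hx₁ hpos hU hK hfr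
  refine ⟨⟨hsub, fun ⟨y, hy⟩ => ?_⟩, fun ⟨hd, hc⟩ => hsub.antisymm ?_⟩
  · obtain ⟨_, ⟨a, ha, -⟩, -⟩ := hsub hy
    exact ⟨a, ha⟩
  · rw [limSubdiff_coe_eq_singleton_gradient hd hc]
    rintro _ ⟨_, ⟨u, hu, _, ⟨_, rfl, rfl⟩, rfl⟩, rfl⟩
    exact smul_sub_mem_limSubdiff_tau hproper.2 hx₁ ha₂ hd hc hu

/-- Quotient rule for the limiting subdifferential of `τ = φ₁/φ₂`. -/
theorem statement0 {n : ℕ} (φ₁ : EuclideanSpace ℝ (Fin n) → EReal)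
    (φ₂ : EuclideanSpace ℝ (Fin n) → ℝ)
    (hproper : Proper φ₁) (hclosed : LowerSemicontinuous φ₁)
    (hcont : ContinuousOn φ₁ (edom φ₁))
    (x : EuclideanSpace ℝ (Fin n))
    (hx₁ : φ₁ x ≠ ⊤) (hx₂ : φ₂ x ≠ 0)
    (ha₁ : (0 : EReal) < φ₁ x) (ha₂ : 0 < φ₂ x)
    (hlip : ∃ U ∈ 𝓝 x, ∃ K : ℝ≥0, LipschitzOnWith K φ₂ U)
    (hfr : ∀ᶠ z in 𝓝 x, (frSubdiff (fun w => ((φ₂ w : ℝ) : EReal)) z).Nonempty) :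
    (limSubdiff (tau φ₁ φ₂) x ⊆
        (φ₂ x)⁻¹ • (limSubdiff φ₁ x -
          ((φ₁ x).toReal / φ₂ x) • limSubdiff (fun w => ((φ₂ w : ℝ) : EReal)) x) ∧
      ((limSubdiff (tau φ₁ φ₂) x).Nonempty → (limSubdiff φ₁ x).Nonempty)) ∧
    (((∀ᶠ z in 𝓝 x, DifferentiableAt ℝ φ₂ z) ∧ ContinuousAt (gradient φ₂) x) →
      limSubdiff (tau φ₁ φ₂) x =
        (φ₂ x)⁻¹ • (limSubdiff φ₁ x -
          ((φ₁ x).toReal / φ₂ x) • limSubdiff (fun w => ((φ₂ w : ℝ) : EReal)) x)) :=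
  statement0_general φ₁ φ₂ hproper hclosed hcont x hx₁ ha₁ ha₂ hlip hfr

end Paper
end
end

section
/- (Uniformized KL property, without lower semicontinuity.) Let Υ ⊆ ℝ^n be a compact set and let φ: ℝ^n → (−∞,+∞] be proper and constant on Υ. (i) If φ satisfies the KL property at each point of Υ, then there exist ε > 0, δ > 0 and a continuous concave function ϕ: [0,ε) → [0,+∞) with ϕ(0) = 0, ϕ continuously differentiable on (0,ε) with ϕ′ > 0, such that ϕ′(φ(z) − φ(x))·dist(0, ∂φ(z)) ≥ 1 holds for every x ∈ Υ and every z ∈ B(x,δ) with φ(x) < φ(z) < φ(x) + ε. (ii) If φ satisfies the KL property at each point of Υ with exponent θ ∈ [0,1), then there exist ε, δ, c > 0 such that dist(0, ∂φ(z)) ≥ c·(φ(z) − φ(x))^θ holds for every x ∈ Υ and every z ∈ B(x,δ) with φ(x) < φ(z) < φ(x) + ε. -/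
open Filter Topology Set
open scoped RealInnerProductSpace Pointwise NNReal

noncomputable section

/-!
Cover the compact set `Υ` by finitely many of the balls on which the local KL inequalities hold.
A Lebesgue number of this cover is a uniform radius, and the smallest of the finitely many local
level bounds `ε` is a uniform one; since `φ` is constant on `Υ`, the level band around any point
of `Υ` is the one around the centre of its ball. Finally, the sum of the finitely many
desingularizing functions (resp. the smallest constant `c`) serves all centres at once.
-/

open Metric
open scoped ENNReal

lemma concaveOn_finsetSum {ι : Type*} {s : Set ℝ} (hs : Convex ℝ s) (t : Finset ι) {f : ι → ℝ → ℝ}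
    (hf : ∀ i ∈ t, ConcaveOn ℝ s (f i)) : ConcaveOn ℝ s (fun x => ∑ i ∈ t, f i x) := by
  rw [← Finset.sum_fn]
  exact Finset.sum_induction f (ConcaveOn ℝ s) (fun _ _ => ConcaveOn.add) (concaveOn_const 0 hs) hf

structure IsDesingularizer (ε : ℝ) (ϕ ϕ' : ℝ → ℝ) : Prop where
  map_zero : ϕ 0 = 0
  continuousOn : ContinuousOn ϕ (Ico 0 ε)
  concaveOn : ConcaveOn ℝ (Ico 0 ε) ϕ
  hasDerivAt : ∀ s ∈ Ioo (0 : ℝ) ε, HasDerivAt ϕ (ϕ' s) s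
  continuousOn_deriv : ContinuousOn ϕ' (Ioo 0 ε)
  deriv_pos : ∀ s ∈ Ioo (0 : ℝ) ε, 0 < ϕ' s

namespace IsDesingularizer

variable {ε : ℝ} {ϕ ϕ' : ℝ → ℝ}

lemma id_one : IsDesingularizer ε id 1 :=
  ⟨rfl, continuousOn_id, concaveOn_id (convex_Ico 0 ε), fun s _ => hasDerivAt_id s,
    continuousOn_const, fun _ _ => one_pos⟩

lemma mono (h : IsDesingularizer ε ϕ ϕ') {ε' : ℝ} (hε : ε' ≤ ε) : IsDesingularizer ε' ϕ ϕ' where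
  map_zero := h.map_zero
  continuousOn := h.continuousOn.mono (Ico_subset_Ico_right hε)
  concaveOn := h.concaveOn.subset (Ico_subset_Ico_right hε) (convex_Ico 0 ε')
  hasDerivAt s hs := h.hasDerivAt s (Ioo_subset_Ioo_right hε hs)
  continuousOn_deriv := h.continuousOn_deriv.mono (Ioo_subset_Ioo_right hε)
  deriv_pos s hs := h.deriv_pos s (Ioo_subset_Ioo_right hε hs)

lemma sum {ι : Type*} {t : Finset ι} (ht : t.Nonempty) {ϕ ϕ' : ι → ℝ → ℝ}
    (h : ∀ i ∈ t, IsDesingularizer ε (ϕ i) (ϕ' i)) :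
    IsDesingularizer ε (fun s => ∑ i ∈ t, ϕ i s) (fun s => ∑ i ∈ t, ϕ' i s) where
  map_zero := Finset.sum_eq_zero fun i hi => (h i hi).map_zero
  continuousOn := continuousOn_finsetSum t fun i hi => (h i hi).continuousOn
  concaveOn := concaveOn_finsetSum (convex_Ico 0 ε) t fun i hi => (h i hi).concaveOn
  hasDerivAt s hs := HasDerivAt.fun_sum fun i hi => (h i hi).hasDerivAt s hs
  continuousOn_deriv := continuousOn_finsetSum t fun i hi => (h i hi).continuousOn_deriv
  deriv_pos s hs := Finset.sum_pos (fun i hi => (h i hi).deriv_pos s hs) ht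

end IsDesingularizer

lemma Finset.exists_pos_forall_le {ι : Type*} (t : Finset ι) {f : ι → ℝ}
    (hf : ∀ i ∈ t, 0 < f i) : ∃ η > 0, ∀ i ∈ t, η ≤ f i := by
  rcases t.eq_empty_or_nonempty with rfl | ht
  · exact ⟨1, one_pos, by simp⟩
  · exact ⟨t.inf' ht f, (Finset.lt_inf'_iff ht).2 hf, fun i hi => t.inf'_le f hi⟩

lemma EReal.toReal_sub_toReal_mem_Ioo {a b : EReal} {ε : ℝ} (h₁ : a < b) (h₂ : b < a + ε) :
    b.toReal - a.toReal ∈ Ioo 0 ε := by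
  have ha_top : a ≠ ⊤ := h₁.ne_top
  have ha_bot : a ≠ ⊥ := by
    rintro rfl
    exact not_lt_bot (EReal.bot_add _ ▸ h₂)
  lift a to ℝ using ⟨ha_top, ha_bot⟩
  have hb_top : b ≠ ⊤ := (h₂.trans_le le_top).ne
  lift b to ℝ using ⟨hb_top, h₁.ne_bot⟩
  rw [EReal.toReal_coe, EReal.toReal_coe]
  norm_cast at h₁ h₂
  constructor <;> linarith

section Uniformization

variable {X : Type*} [PseudoMetricSpace X] {φ : X → EReal} {Υ : Set X}

lemma IsCompact.exists_uniform_level_nhds (hΥ : IsCompact Υ)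
    (hconst : ∀ x ∈ Υ, ∀ y ∈ Υ, φ x = φ y) {ε δ : Υ → ℝ} (hε : ∀ i, 0 < ε i)
    (hδ : ∀ i, 0 < δ i) {Q : Υ → X → Prop}
    (hQ : ∀ i : Υ, ∀ z ∈ ball (i : X) (δ i), φ i < φ z → φ z < φ i + ε i → Q i z) :
    ∃ t : Finset Υ, ∃ ε₀ > 0, ∃ δ₀ > 0, (∀ i ∈ t, ε₀ ≤ ε i) ∧
      ∀ x ∈ Υ, ∃ i ∈ t, φ i = φ x ∧
        ∀ z ∈ ball x δ₀, φ x < φ z → φ z < φ x + ε₀ → Q i z := by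
  obtain ⟨t, hcover⟩ := hΥ.elim_finite_subcover (fun i : Υ => ball (i : X) (δ i))
    (fun _ => isOpen_ball) fun x hx => mem_iUnion.2 ⟨⟨x, hx⟩, mem_ball_self (hδ _)⟩
  obtain ⟨δ₀, hδ₀, hleb⟩ := lebesgue_number_lemma_of_metric hΥ
    (c := fun i : t => ball ((i : Υ) : X) (δ i)) (fun _ => isOpen_ball)
    (hcover.trans fun x hx => by simpa using hx)
  obtain ⟨ε₀, hε₀, hε₀le⟩ := t.exists_pos_forall_le fun i _ => hε i
  refine ⟨t, ε₀, hε₀, δ₀, hδ₀, hε₀le, fun x hx => ?_⟩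
  obtain ⟨⟨i, hi⟩, hball⟩ := hleb x hx
  have hφi : φ i = φ x := hconst i i.2 x hx
  refine ⟨i, hi, hφi, fun z hz h₁ h₂ => hQ i z (hball hz) (hφi ▸ h₁) ?_⟩
  rw [hφi]
  exact h₂.trans_le (by gcongr; exact_mod_cast hε₀le i hi)

-- `D z` stands for `dist(0, ∂φ(z))`, about which the uniformization needs to know nothing.
variable (D : X → ℝ≥0∞)

theorem IsCompact.exists_uniform_desingularizer (hΥ : IsCompact Υ)
    (hconst : ∀ x ∈ Υ, ∀ y ∈ Υ, φ x = φ y)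
    (hKL : ∀ x ∈ Υ, ∃ ε > (0 : ℝ), ∃ δ > (0 : ℝ), ∃ ϕ ϕ' : ℝ → ℝ, IsDesingularizer ε ϕ ϕ' ∧
      ∀ z ∈ ball x δ, φ x < φ z → φ z < φ x + (ε : EReal) →
        1 ≤ ENNReal.ofReal (ϕ' ((φ z).toReal - (φ x).toReal)) * D z) :
    ∃ ε > (0 : ℝ), ∃ δ > (0 : ℝ), ∃ ϕ ϕ' : ℝ → ℝ, IsDesingularizer ε ϕ ϕ' ∧
      ∀ x ∈ Υ, ∀ z ∈ ball x δ, φ x < φ z → φ z < φ x + (ε : EReal) →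
        1 ≤ ENNReal.ofReal (ϕ' ((φ z).toReal - (φ x).toReal)) * D z := by
  rcases Υ.eq_empty_or_nonempty with rfl | ⟨x₀, hx₀⟩
  · exact ⟨1, one_pos, 1, one_pos, id, 1, IsDesingularizer.id_one, by simp⟩
  choose ε hε δ hδ ϕ ϕ' hϕ hineq using fun x : Υ => hKL x x.2
  obtain ⟨t, ε₀, hε₀, δ₀, hδ₀, hε₀le, hunif⟩ := hΥ.exists_uniform_level_nhds hconst hε hδ hineq
  have ht : t.Nonempty := let ⟨i, hi, _⟩ := hunif x₀ hx₀; ⟨i, hi⟩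
  -- the sum of the local desingularizers has a larger derivative than each of them
  have hsum := IsDesingularizer.sum ht fun i hi => (hϕ i).mono (hε₀le i hi)
  refine ⟨ε₀, hε₀, δ₀, hδ₀, _, _, hsum, fun x hx z hz h₁ h₂ => ?_⟩
  obtain ⟨i, hi, hφi, hQ⟩ := hunif x hx
  have hgap := EReal.toReal_sub_toReal_mem_Ioo h₁ h₂
  have hineq_i := hQ z hz h₁ h₂
  rw [hφi] at hineq_i
  refine hineq_i.trans (mul_le_mul_left (ENNReal.ofReal_le_ofReal ?_) _)
  exact Finset.single_le_sum (f := fun j => ϕ' j _)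
    (fun j hj => ((hϕ j).deriv_pos _ (Ioo_subset_Ioo_right (hε₀le j hj) hgap)).le) hi

theorem IsCompact.exists_uniform_KL_exponent (hΥ : IsCompact Υ)
    (hconst : ∀ x ∈ Υ, ∀ y ∈ Υ, φ x = φ y) {θ : ℝ}
    (hKL : ∀ x ∈ Υ, ∃ c > (0 : ℝ), ∃ ε > (0 : ℝ), ∃ δ > (0 : ℝ),
      ∀ z ∈ ball x δ, φ x < φ z → φ z < φ x + (ε : EReal) →
        ENNReal.ofReal (c * ((φ z).toReal - (φ x).toReal) ^ θ) ≤ D z) :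
    ∃ ε > (0 : ℝ), ∃ δ > (0 : ℝ), ∃ c > (0 : ℝ),
      ∀ x ∈ Υ, ∀ z ∈ ball x δ, φ x < φ z → φ z < φ x + (ε : EReal) →
        ENNReal.ofReal (c * ((φ z).toReal - (φ x).toReal) ^ θ) ≤ D z := by
  choose c hc ε hε δ hδ hineq using fun x : Υ => hKL x x.2
  obtain ⟨t, ε₀, hε₀, δ₀, hδ₀, -, hunif⟩ := hΥ.exists_uniform_level_nhds hconst hε hδ hineq
  obtain ⟨c₀, hc₀, hc₀le⟩ := t.exists_pos_forall_le fun i _ => hc i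
  refine ⟨ε₀, hε₀, δ₀, hδ₀, c₀, hc₀, fun x hx z hz h₁ h₂ => ?_⟩
  obtain ⟨i, hi, hφi, hQ⟩ := hunif x hx
  have hgap := EReal.toReal_sub_toReal_mem_Ioo h₁ h₂
  have hineq_i := hQ z hz h₁ h₂
  rw [hφi] at hineq_i
  refine (ENNReal.ofReal_le_ofReal ?_).trans hineq_i
  exact mul_le_mul_of_nonneg_right (hc₀le i hi) (Real.rpow_nonneg hgap.1.le θ)

end Uniformization

namespace Paper

theorem statement2_general {n : ℕ} (φ : EuclideanSpace ℝ (Fin n) → EReal)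
    (Υ : Set (EuclideanSpace ℝ (Fin n)))
    (hcomp : IsCompact Υ)
    (hconst : ∀ x ∈ Υ, ∀ y ∈ Υ, φ x = φ y) :
    ((∀ x ∈ Υ, KLAt φ x) →
      ∃ ε > (0 : ℝ), ∃ δ > (0 : ℝ), ∃ ϕ ϕ' : ℝ → ℝ,
        ϕ 0 = 0 ∧ ContinuousOn ϕ (Set.Ico 0 ε) ∧ ConcaveOn ℝ (Set.Ico 0 ε) ϕ ∧
        (∀ s ∈ Set.Ioo (0 : ℝ) ε, HasDerivAt ϕ (ϕ' s) s) ∧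
        ContinuousOn ϕ' (Set.Ioo 0 ε) ∧ (∀ s ∈ Set.Ioo (0 : ℝ) ε, 0 < ϕ' s) ∧
        ∀ x ∈ Υ, ∀ z ∈ Metric.ball x δ, φ x < φ z → φ z < φ x + (ε : EReal) →
          1 ≤ ENNReal.ofReal (ϕ' ((φ z).toReal - (φ x).toReal)) *
              EMetric.infEdist (0 : EuclideanSpace ℝ (Fin n)) (limSubdiff φ z)) ∧
    (∀ θ : ℝ, 0 ≤ θ → θ < 1 → (∀ x ∈ Υ, KLExpAt φ x θ) →
      ∃ ε > (0 : ℝ), ∃ δ > (0 : ℝ), ∃ c > (0 : ℝ),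
        ∀ x ∈ Υ, ∀ z ∈ Metric.ball x δ, φ x < φ z → φ z < φ x + (ε : EReal) →
          ENNReal.ofReal (c * ((φ z).toReal - (φ x).toReal) ^ θ) ≤
            EMetric.infEdist (0 : EuclideanSpace ℝ (Fin n)) (limSubdiff φ z)) := by
  refine ⟨fun hKL => ?_, fun θ _ _ hKL => hcomp.exists_uniform_KL_exponent _ hconst hKL⟩
  obtain ⟨ε, hε, δ, hδ, ϕ, ϕ', ⟨h0, hc, hcc, hd, hc', hp⟩, hineq⟩ :=
    hcomp.exists_uniform_desingularizer _ hconst fun x hx => by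
      obtain ⟨ε, hε, δ, hδ, ϕ, ϕ', h0, hc, hcc, hd, hc', hp, hineq⟩ := hKL x hx
      exact ⟨ε, hε, δ, hδ, ϕ, ϕ', ⟨h0, hc, hcc, hd, hc', hp⟩, hineq⟩
  exact ⟨ε, hε, δ, hδ, ϕ, ϕ', h0, hc, hcc, hd, hc', hp, hineq⟩

/-- Uniformized KL property over a compact set, without lower semicontinuity. -/
theorem statement2 {n : ℕ} (φ : EuclideanSpace ℝ (Fin n) → EReal)
    (Υ : Set (EuclideanSpace ℝ (Fin n)))
    (hcomp : IsCompact Υ) (hproper : Proper φ)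
    (hconst : ∀ x ∈ Υ, ∀ y ∈ Υ, φ x = φ y)
    (hdom : ∀ x ∈ Υ, (limSubdiff φ x).Nonempty) :
    ((∀ x ∈ Υ, KLAt φ x) →
      ∃ ε > (0 : ℝ), ∃ δ > (0 : ℝ), ∃ ϕ ϕ' : ℝ → ℝ,
        ϕ 0 = 0 ∧ ContinuousOn ϕ (Set.Ico 0 ε) ∧ ConcaveOn ℝ (Set.Ico 0 ε) ϕ ∧
        (∀ s ∈ Set.Ioo (0 : ℝ) ε, HasDerivAt ϕ (ϕ' s) s) ∧
        ContinuousOn ϕ' (Set.Ioo 0 ε) ∧ (∀ s ∈ Set.Ioo (0 : ℝ) ε, 0 < ϕ' s) ∧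
        ∀ x ∈ Υ, ∀ z ∈ Metric.ball x δ, φ x < φ z → φ z < φ x + (ε : EReal) →
          1 ≤ ENNReal.ofReal (ϕ' ((φ z).toReal - (φ x).toReal)) *
              EMetric.infEdist (0 : EuclideanSpace ℝ (Fin n)) (limSubdiff φ z)) ∧
    (∀ θ : ℝ, 0 ≤ θ → θ < 1 → (∀ x ∈ Υ, KLExpAt φ x θ) →
      ∃ ε > (0 : ℝ), ∃ δ > (0 : ℝ), ∃ c > (0 : ℝ),
        ∀ x ∈ Υ, ∀ z ∈ Metric.ball x δ, φ x < φ z → φ z < φ x + (ε : EReal) →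
          ENNReal.ofReal (c * ((φ z).toReal - (φ x).toReal) ^ θ) ≤
            EMetric.infEdist (0 : EuclideanSpace ℝ (Fin n)) (limSubdiff φ z)) :=
  statement2_general φ Υ hcomp hconst

end Paper
end
end

section
/- Under the blanket assumptions, the functions F and Q have the same infimum over ℝ^n and ℝ^n × ℝ^n respectively. Moreover, for any (x⋆,y⋆) ∈ dom(Q): x⋆ is a global minimizer of F and F(x⋆)·y⋆ ∈ F(x⋆)·∂g(x⋆), if and only if (x⋆,y⋆) is a global minimizer of Q. -/
open Filter Topology Set
open scoped RealInnerProductSpace Pointwise NNReal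

noncomputable section

namespace Paper

variable {E : Type*} [NormedAddCommGroup E] [InnerProductSpace ℝ E]

variable {E : Type*} [NormedAddCommGroup E] [InnerProductSpace ℝ E]

theorem exists_subgrad' [FiniteDimensional ℝ E] {g : E → ℝ} (hg : ConvexOn ℝ Set.univ g)
    (x : E) : ∃ y : E, y ∈ cvxSubdiff g x := by
  have hcont : Continuous g := hg.locallyLipschitz.continuous
  set S : Set (E × ℝ) := {p | g p.1 < p.2} with hS
  have hSopen : IsOpen S := isOpen_lt (hcont.comp continuous_fst) continuous_snd
  have hSconv : Convex ℝ S := by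
    intro p hp q hq a b ha hb hab
    simp only [hS, Set.mem_setOf_eq] at *
    have hkey : g (a • p.1 + b • q.1) ≤ a * g p.1 + b * g q.1 :=
      hg.2 (Set.mem_univ p.1) (Set.mem_univ q.1) ha hb hab
    have hlt : a * g p.1 + b * g q.1 < a * p.2 + b * q.2 := by
      rcases eq_or_lt_of_le ha with h0 | hpos
      · have hb1 : b = 1 := by linarith
        rw [← h0, hb1]; simpa using hq
      · have h1 : a * g p.1 < a * p.2 := by nlinarith
        have h2 : b * g q.1 ≤ b * q.2 := by nlinarith
        linarith
    calc g (a • p + b • q).1 = g (a • p.1 + b • q.1) := rfl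
      _ < a * p.2 + b * q.2 := lt_of_le_of_lt hkey hlt
      _ = (a • p + b • q).2 := by simp [Prod.smul_def]
  have hxnot : (x, g x) ∉ S := by simp [hS]
  obtain ⟨L, hL⟩ := geometric_hahn_banach_open_point hSconv hSopen hxnot
  set c : ℝ := L (0, 1) with hc
  have hsplit : ∀ z : E, ∀ t : ℝ, L (z, t) = L (z, 0) + t * c := by
    intro z t
    have : (z, t) = (z, 0) + t • ((0 : E), (1 : ℝ)) := by simp [Prod.ext_iff]
    rw [this, map_add, map_smul]; simp [hc, smul_eq_mul]
  have hcneg : c < 0 := by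
    have h1 : L (x, g x + 1) < L (x, g x) := hL _ (by simp [hS])
    rw [hsplit x (g x + 1), hsplit x (g x)] at h1; linarith
  have hne : c ≠ 0 := hcneg.ne
  have hkey : ∀ z : E, L (z, 0) + g z * c ≤ L (x, 0) + g x * c := by
    intro z
    refine le_of_forall_pos_lt_add fun ε hε => ?_
    have hdp : 0 < ε / (-c) := div_pos hε (neg_pos.2 hcneg)
    have hmem : (z, g z + ε / (-c)) ∈ S := by
      simp only [hS, Set.mem_setOf_eq]; linarith
    have h4 := hL _ hmem
    rw [hsplit z (g z + ε / (-c)), hsplit x (g x)] at h4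
    have hc' : ε / (-c) * c = -ε := by
      rw [div_neg, neg_mul, div_mul_eq_mul_div, mul_div_assoc, div_self hne]; ring
    nlinarith [h4, hc']
  have hpos : (0 : ℝ) < -(1/c) := neg_pos.2 (one_div_neg.2 hcneg)
  set ψ : E →L[ℝ] ℝ := (-(1/c)) • (L.comp (ContinuousLinearMap.inl ℝ E ℝ)) with hψ
  refine ⟨(InnerProductSpace.toDual ℝ E).symm ψ, fun z => ?_⟩
  have hinner : ⟪(InnerProductSpace.toDual ℝ E).symm ψ, z - x⟫ = ψ (z - x) :=
    InnerProductSpace.toDual_symm_apply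
  have hLsub : L ((z - x, 0) : E × ℝ) = L (z, 0) - L (x, 0) := by
    rw [show ((z - x, (0:ℝ)) : E × ℝ) = (z, 0) - (x, 0) by simp [Prod.ext_iff], map_sub]
  have hψval : ψ (z - x) = -(1/c) * (L (z, 0) - L (x, 0)) := by
    simp only [hψ, ContinuousLinearMap.smul_apply, ContinuousLinearMap.comp_apply,
      ContinuousLinearMap.inl_apply, smul_eq_mul]
    rw [hLsub]
  rw [hinner, hψval]
  have h5 : L (z, 0) - L (x, 0) ≤ (g x - g z) * c := by nlinarith [hkey z]
  have h6 := mul_le_mul_of_nonneg_left h5 hpos.le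
  have h7 : -(1/c) * ((g x - g z) * c) = g z - g x := by field_simp; ring
  linarith [h6, h7.symm ▸ h6]

theorem fconj_ge (g : E → ℝ) (x y : E) : ((⟪x,y⟫ - g x : ℝ) : EReal) ≤ fconj g y := by
  have h : ((⟪x,y⟫ - g x : ℝ) : EReal) = ((⟪x,y⟫ : ℝ) : EReal) - ((g x : ℝ) : EReal) := by
    norm_cast
  rw [h]
  exact le_iSup (fun z => ((⟪z,y⟫ : ℝ) : EReal) - ((g z : ℝ) : EReal)) x

theorem eta_le_g (g : E → ℝ) (x y : E) : eta g x y ≤ ((g x : ℝ) : EReal) := by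
  have h1 := fconj_ge g x y
  have h2 := EReal.sub_le_sub (le_refl ((⟪x,y⟫ : ℝ) : EReal)) h1
  calc eta g x y ≤ ((⟪x,y⟫ : ℝ) : EReal) - ((⟪x,y⟫ - g x : ℝ) : EReal) := h2
    _ = ((g x : ℝ) : EReal) := by norm_cast; ring

theorem eta_of_subgrad {g : E → ℝ} {x y : E} (hy : y ∈ cvxSubdiff g x) :
    eta g x y = ((g x : ℝ) : EReal) := by
  have hconj : fconj g y = ((⟪x,y⟫ - g x : ℝ) : EReal) := by
    refine le_antisymm (iSup_le fun z => ?_) (fconj_ge g x y)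
    have hz : g x + ⟪y, z - x⟫ ≤ g z := hy z
    have hib : ⟪y, z - x⟫ = ⟪z,y⟫ - ⟪x,y⟫ := by
      rw [inner_sub_right, real_inner_comm y z, real_inner_comm y x]
    have : (⟪z,y⟫ - g z : ℝ) ≤ ⟪x,y⟫ - g x := by rw [hib] at hz; linarith
    calc ((⟪z,y⟫ : ℝ) : EReal) - ((g z : ℝ) : EReal) = ((⟪z,y⟫ - g z : ℝ) : EReal) := by norm_cast
      _ ≤ ((⟪x,y⟫ - g x : ℝ) : EReal) := EReal.coe_le_coe_iff.2 this
  show ((⟪x,y⟫ : ℝ) : EReal) - fconj g y = _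
  rw [hconj]; norm_cast; ring

theorem subgrad_of_eta_eq {g : E → ℝ} {x y : E} (h : eta g x y = ((g x : ℝ) : EReal)) :
    y ∈ cvxSubdiff g x := by
  have hBne_bot : fconj g y ≠ ⊥ := fun hbot => by
    have := fconj_ge g x y; rw [hbot] at this; simp at this
    rw [← EReal.coe_sub] at this; exact EReal.coe_ne_bot _ this
  have hBne_top : fconj g y ≠ ⊤ := by
    intro htop
    have : eta g x y = ⊥ := by
      show ((⟪x,y⟫ : ℝ) : EReal) - fconj g y = ⊥
      rw [htop]; simp
    rw [this] at h; simp at h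
  have hcoe := EReal.coe_toReal hBne_top hBne_bot
  have hfc : (fconj g y).toReal = ⟪x,y⟫ - g x := by
    have h' : ((⟪x,y⟫ : ℝ) : EReal) - fconj g y = ((g x : ℝ) : EReal) := h
    rw [← hcoe] at h'
    norm_cast at h'
    linarith
  intro z
  have hz : ((⟪z,y⟫ - g z : ℝ) : EReal) ≤ fconj g y := fconj_ge g z y
  rw [← hcoe] at hz
  have hz' : ⟪z,y⟫ - g z ≤ (fconj g y).toReal := EReal.coe_le_coe_iff.1 hz
  rw [hfc] at hz'
  have hib : ⟪y, z - x⟫ = ⟪z,y⟫ - ⟪x,y⟫ := by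
    rw [inner_sub_right, real_inner_comm y z, real_inner_comm y x]
  rw [hib]; linarith



theorem zr_nonneg' [CompleteSpace E] {f : E → EReal} {g h : E → ℝ} (hb : Blanket f g h) {x : E}
    (hfx : f x ≠ ⊤) : 0 ≤ (f x).toReal + h x := by
  have hbot := hb.f_proper.2 x
  have hz := hb.zeta_nonneg x hfx
  have hcoe : ((((f x).toReal + h x : ℝ)) : EReal) = zeta f h x := by
    rw [EReal.coe_add, EReal.coe_toReal hfx hbot]; rfl
  rw [← hcoe] at hz
  exact_mod_cast hz

theorem Ffun_eq' {f : E → EReal} {g h : E → ℝ} {x : E} (hgx : g x ≠ 0) (hfx : f x ≠ ⊤) :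
    Ffun f g h x = ((((f x).toReal + h x) / g x : ℝ) : EReal) := by
  simp only [Ffun]; rw [if_pos ⟨hgx, hfx⟩]

theorem Ffun_top' {f : E → EReal} {g h : E → ℝ} {x : E} (hx : ¬ (g x ≠ 0 ∧ f x ≠ ⊤)) :
    Ffun f g h x = ⊤ := by
  simp only [Ffun]; rw [if_neg hx]

theorem Qfun_eq' {f : E → EReal} {g h : E → ℝ} {x y : E} (hfx : f x ≠ ⊤)
    (he : 0 < eta g x y) :
    Qfun f g h x y = ((((f x).toReal + h x) / (eta g x y).toReal : ℝ) : EReal) := by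
  simp only [Qfun]; rw [if_pos ⟨hfx, he⟩]

theorem Qfun_top' {f : E → EReal} {g h : E → ℝ} {x y : E}
    (hx : ¬ (f x ≠ ⊤ ∧ 0 < eta g x y)) : Qfun f g h x y = ⊤ := by
  simp only [Qfun]; rw [if_neg hx]

theorem eta_facts {g : E → ℝ} {x y : E} (he : 0 < eta g x y) :
    0 < (eta g x y).toReal ∧ (eta g x y).toReal ≤ g x ∧ 0 < g x ∧
      eta g x y = (((eta g x y).toReal : ℝ) : EReal) := by
  have hle := eta_le_g g x y
  have htop : eta g x y ≠ ⊤ := fun ht => by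
    rw [ht] at hle; exact (EReal.coe_lt_top (g x)).not_ge hle
  have hbot : eta g x y ≠ ⊥ := fun hb0 => by rw [hb0] at he; simp at he
  have hco := EReal.coe_toReal htop hbot
  rw [← hco] at he hle
  have h1 : 0 < (eta g x y).toReal := EReal.coe_pos.1 he
  have h2 : (eta g x y).toReal ≤ g x := EReal.coe_le_coe_iff.1 hle
  exact ⟨h1, h2, lt_of_lt_of_le h1 h2, hco.symm⟩

theorem F_le_Q' [CompleteSpace E] {f : E → EReal} {g h : E → ℝ} (hb : Blanket f g h)
    (x y : E) : Ffun f g h x ≤ Qfun f g h x y := by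
  by_cases hq : f x ≠ ⊤ ∧ 0 < eta g x y
  · obtain ⟨hfx, he⟩ := hq
    obtain ⟨h1, h2, h3, _⟩ := eta_facts he
    rw [Ffun_eq' h3.ne' hfx, Qfun_eq' hfx he]
    have hz := zr_nonneg' hb hfx
    exact EReal.coe_le_coe_iff.2 (div_le_div_of_nonneg_left hz h1 h2)
  · rw [Qfun_top' hq]; exact le_top

theorem Q_eq_F' [CompleteSpace E] {f : E → EReal} {g h : E → ℝ} (hb : Blanket f g h)
    {x y : E} (hgx : g x ≠ 0) (hfx : f x ≠ ⊤) (hy : y ∈ cvxSubdiff g x) :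
    Qfun f g h x y = Ffun f g h x := by
  have hgpos : 0 < g x := (hb.g_nonneg x).lt_of_ne (Ne.symm hgx)
  have he : eta g x y = ((g x : ℝ) : EReal) := eta_of_subgrad hy
  have hepos : 0 < eta g x y := by rw [he]; exact_mod_cast hgpos
  rw [Qfun_eq' hfx hepos, Ffun_eq' hgx hfx, he, EReal.toReal_coe]

/-- `F` and `Q` have the same infimum, and global minimizers correspond. -/
theorem statement4 {n : ℕ} (f : EuclideanSpace ℝ (Fin n) → EReal)
    (g h : EuclideanSpace ℝ (Fin n) → ℝ) (hb : Blanket f g h)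
    (x' y' : EuclideanSpace ℝ (Fin n)) (hdom : Qfun f g h x' y' ≠ ⊤) :
    (⨅ x, Ffun f g h x) = (⨅ x, ⨅ y, Qfun f g h x y) ∧
    (((∀ z, Ffun f g h x' ≤ Ffun f g h z) ∧
        (Ffun f g h x').toReal • y' ∈ (Ffun f g h x').toReal • cvxSubdiff g x') ↔
      ∀ x y, Qfun f g h x' y' ≤ Qfun f g h x y) := by
  have hdom' : f x' ≠ ⊤ ∧ 0 < eta g x' y' := by
    by_contra hcn; exact hdom (Qfun_top' hcn)
  obtain ⟨hfx', he'⟩ := hdom'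
  obtain ⟨her1, her2, hgpos', hco'⟩ := eta_facts he'
  have hgx' : g x' ≠ 0 := hgpos'.ne'
  set zr : ℝ := (f x').toReal + h x' with hzr
  have hFx' : Ffun f g h x' = ((zr / g x' : ℝ) : EReal) := Ffun_eq' hgx' hfx'
  have hQx' : Qfun f g h x' y' = ((zr / (eta g x' y').toReal : ℝ) : EReal) :=
    Qfun_eq' hfx' he'
  have hcF : (Ffun f g h x').toReal = zr / g x' := by rw [hFx', EReal.toReal_coe]
  have hznn : 0 ≤ zr := zr_nonneg' hb hfx'
  constructor
  · apply le_antisymm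
    · exact le_iInf₂ fun x y => iInf_le_of_le x (F_le_Q' hb x y)
    · refine le_iInf fun x => ?_
      by_cases hx : g x ≠ 0 ∧ f x ≠ ⊤
      · obtain ⟨y, hy⟩ := exists_subgrad' hb.g_convex x
        calc (⨅ x, ⨅ y, Qfun f g h x y) ≤ Qfun f g h x y :=
              iInf_le_of_le x (iInf_le _ y)
          _ = Ffun f g h x := Q_eq_F' hb hx.1 hx.2 hy
      · rw [Ffun_top' hx]; exact le_top
  · constructor
    · rintro ⟨hmin, hy⟩ x y
      by_cases hzz : zr = 0
      · have hF0 : Ffun f g h x' = (0 : EReal) := by rw [hFx', hzz]; norm_num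
        have hQ0 : Qfun f g h x' y' = (0 : EReal) := by rw [hQx', hzz]; norm_num
        calc Qfun f g h x' y' = Ffun f g h x' := by rw [hF0, hQ0]
          _ ≤ Ffun f g h x := hmin x
          _ ≤ Qfun f g h x y := F_le_Q' hb x y
      · have hcne : (Ffun f g h x').toReal ≠ 0 := by
          rw [hcF]; exact div_ne_zero hzz hgx'
        obtain ⟨s, hs, hes⟩ := hy
        have hy' : y' ∈ cvxSubdiff g x' := by
          have := smul_right_injective (EuclideanSpace ℝ (Fin n)) hcne hes
          rwa [← this]
        calc Qfun f g h x' y' = Ffun f g h x' := Q_eq_F' hb hgx' hfx' hy'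
          _ ≤ Ffun f g h x := hmin x
          _ ≤ Qfun f g h x y := F_le_Q' hb x y
    · intro hQ
      have hmin : ∀ z, Ffun f g h x' ≤ Ffun f g h z := by
        intro z
        by_cases hz : g z ≠ 0 ∧ f z ≠ ⊤
        · obtain ⟨yz, hyz⟩ := exists_subgrad' hb.g_convex z
          calc Ffun f g h x' ≤ Qfun f g h x' y' := F_le_Q' hb x' y'
            _ ≤ Qfun f g h z yz := hQ z yz
            _ = Ffun f g h z := Q_eq_F' hb hz.1 hz.2 hyz
        · rw [Ffun_top' hz]; exact le_top
      refine ⟨hmin, ?_⟩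
      obtain ⟨s, hs⟩ := exists_subgrad' hb.g_convex x'
      by_cases hzz : zr = 0
      · have hc0 : (Ffun f g h x').toReal = 0 := by rw [hcF, hzz, zero_div]
        rw [hc0]
        have h0 : (0 : ℝ) • y' = (0 : ℝ) • s := by simp
        rw [h0]
        exact Set.smul_mem_smul_set hs
      · have hQs : Qfun f g h x' s = Ffun f g h x' := Q_eq_F' hb hgx' hfx' hs
        have h1 : Qfun f g h x' y' ≤ Ffun f g h x' := hQs ▸ hQ x' s
        have h2 : Ffun f g h x' ≤ Qfun f g h x' y' := F_le_Q' hb x' y'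
        have heq : Qfun f g h x' y' = Ffun f g h x' := le_antisymm h1 h2
        rw [hQx', hFx'] at heq
        have heq' : zr / (eta g x' y').toReal = zr / g x' := EReal.coe_eq_coe_iff.1 heq
        have hereq : (eta g x' y').toReal = g x' := by
          have hm : zr * g x' = zr * (eta g x' y').toReal := by
            rw [div_eq_div_iff her1.ne' hgpos'.ne'] at heq'
            linarith
          exact (mul_left_cancel₀ hzz hm).symm
        have hetag : eta g x' y' = ((g x' : ℝ) : EReal) := by rw [hco', hereq]
        exact Set.smul_mem_smul_set (subgrad_of_eta_eq hetag)
end Paper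
end
end

section
/- Under the blanket assumptions, suppose additionally that g is continuously differentiable on Ω and that g* satisfies the calmness condition on dom(g*). Then for every x ∈ dom(F), one has η(x, ∇g(x)) = g(x), x ∈ ∂g*(∇g(x)), and dist(0, ∂F(x)) = dist(0, ∂Q(x, ∇g(x))), where ∂ denotes the limiting subdifferential; consequently 0 ∈ ∂F(x) if and only if 0 ∈ ∂Q(x, ∇g(x)). -/
open Filter Topology Set
open scoped RealInnerProductSpace Pointwise NNReal

noncomputable section

namespace Paper

variable {E : Type*} [NormedAddCommGroup E] [InnerProductSpace ℝ E]

/-!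
Convexity gives `g*(∇g(x)) = ⟪x, ∇g(x)⟫ - g(x)`, i.e. `η(x, ∇g(x)) = g(x)`, and makes `x` a convex
subgradient of `g*` at `∇g(x)`. The distance identity and the equivalence of criticality follow
from `∂F(x) × {0} ⊆ ∂Q(x, ∇g(x))` and `pr₁ ∂Q(x, ∇g(x)) ⊆ ∂F(x)`.

The first inclusion holds because `F ≤ Q` everywhere (Fenchel–Young: `η(x, y) ≤ g(x)`), with
equality along `y = ∇g(x)`. For the second, let `(u_k, v_k)` be Fréchet subgradients of `Q` at
`(x_k, y_k) → (x, ∇g(x))`. Near `x_k`, `ζ = Q(·, y_k) · (⟪·, y_k⟫ - g*(y_k))` with a positive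
affine factor, and `F = ζ · g⁻¹`; two product rules turn `u_k` into the Fréchet subgradient
`w_k = g(x_k)⁻¹ (η(x_k, y_k) u_k + Q(x_k, y_k) y_k) - ζ(x_k) g(x_k)⁻² ∇g(x_k)` of `F` at `x_k`.
Calmness of `g*` at `∇g(x)` gives `η(x_k, y_k) → g(x)`, and then `w_k → u`.
-/

section FrechetSubdifferential

lemma coe_le_iff_le_sub_mul_inv (v : EReal) {a b q t : ℝ} (ht : 0 < t) :
    ((a + b + q * t : ℝ) : EReal) ≤ v ↔ (q : EReal) ≤ (v - a - b) * ((t⁻¹ : ℝ) : EReal) := by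
  induction v using EReal.rec with
  | bot =>
    simp only [EReal.bot_sub, EReal.bot_mul_of_pos (EReal.coe_pos.2 (inv_pos.2 ht)), le_bot_iff]
    exact iff_of_false (EReal.coe_ne_bot _) (EReal.coe_ne_bot _)
  | top => simp [EReal.top_mul_coe_of_pos (inv_pos.2 ht)]
  | coe r =>
    rw [← EReal.coe_sub, ← EReal.coe_sub, ← EReal.coe_mul, EReal.coe_le_coe_iff,
      EReal.coe_le_coe_iff, ← div_eq_mul_inv, le_div_iff₀ ht]
    constructor <;> intro h <;> linarith

lemma mem_frSubdiff_iff_s6 {φ : E → EReal} {x y : E} (hx : φ x ≠ ⊤) (hx' : φ x ≠ ⊥) :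
    y ∈ frSubdiff φ x ↔ ∀ ε > (0 : ℝ), ∀ᶠ z in 𝓝 x,
      (((φ x).toReal + ⟪y, z - x⟫ - ε * ‖z - x‖ : ℝ) : EReal) ≤ φ z := by
  have hφx : φ x = ((φ x).toReal : EReal) := (EReal.coe_toReal hx hx').symm
  have hquot : ∀ (q : ℝ) (z : E), z ≠ x →
      (((((φ x).toReal + ⟪y, z - x⟫ + q * ‖z - x‖ : ℝ)) : EReal) ≤ φ z ↔ (q : EReal) ≤
        (φ z - φ x - ((⟪y, z - x⟫ : ℝ) : EReal)) * ((‖z - x‖⁻¹ : ℝ) : EReal)) := by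
    intro q z hz
    rw [coe_le_iff_le_sub_mul_inv _ (norm_pos_iff.2 (sub_ne_zero.2 hz)), hφx, EReal.toReal_coe]
  rw [frSubdiff, mem_ofPred, and_iff_right hx,
    le_liminf_iff (by isBoundedDefault) (by isBoundedDefault)]
  constructor
  · intro h ε hε
    have hlt := h (-ε : ℝ) (by exact_mod_cast neg_neg_iff_pos.2 hε)
    rw [eventually_nhdsWithin_iff] at hlt
    filter_upwards [hlt] with z hz
    rcases eq_or_ne z x with rfl | hzx
    · rw [sub_self, inner_zero_right, norm_zero, hφx]; simp
    · rw [sub_eq_add_neg, ← neg_mul, hquot _ _ hzx]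
      exact (hz hzx).le
  · intro h c hc
    obtain ⟨q, hcq, hq⟩ := EReal.lt_iff_exists_real_btwn.1 hc
    have hq' : q < 0 := by exact_mod_cast hq
    filter_upwards [eventually_nhdsWithin_of_eventually_nhds (h (-q) (by linarith)),
      self_mem_nhdsWithin] with z hz hzx
    rw [sub_eq_add_neg, ← neg_mul, neg_neg, hquot _ _ hzx] at hz
    exact hcq.trans_le hz

lemma mem_frSubdiff_of_mem_cvxSubdiffE {φ : E → EReal} {x y : E} (hx : φ x ≠ ⊤) (hx' : φ x ≠ ⊥)
    (hy : y ∈ cvxSubdiffE φ x) : y ∈ frSubdiff φ x := by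
  rw [mem_frSubdiff_iff_s6 hx hx']
  intro ε hε
  refine Eventually.of_forall fun z => le_trans ?_ (hy z)
  rw [← EReal.coe_toReal hx hx', ← EReal.coe_add, EReal.coe_le_coe_iff, EReal.toReal_coe]
  nlinarith [norm_nonneg (z - x)]

lemma mem_limSubdiff_of_mem_frSubdiff {φ : E → EReal} {x y : E} (hy : y ∈ frSubdiff φ x) :
    y ∈ limSubdiff φ x :=
  ⟨fun _ => x, fun _ => y, tendsto_const_nhds, tendsto_const_nhds, fun _ => hy,
    tendsto_const_nhds⟩

end FrechetSubdifferential

section ProductRule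

variable [CompleteSpace E]

/-- The arithmetic of the product rule: `r ≈ a + c` and `p ≈ b + d` up to `ε t`. -/
lemma mul_lower_bound_of_approx {a b c d p r t ε : ℝ} (ha : 0 ≤ a) (hp : 0 < p) (hpb : p ≤ b + 1)
    (ht : 0 ≤ t) (hε : 0 ≤ ε) (hr : a + c - ε * t ≤ r) (hpd : b + d - ε * t ≤ p)
    (hc : -(ε * t) ≤ c * (p - b)) :
    a * b + (b * c + a * d) - ε * (a + b + 2) * t ≤ r * p := by
  have h1 : (a + c - ε * t) * p ≤ r * p := mul_le_mul_of_nonneg_right hr hp.le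
  have h2 : a * (b + d - ε * t) ≤ a * p := mul_le_mul_of_nonneg_left hpd ha
  have h3 : ε * t * p ≤ ε * t * (b + 1) := mul_le_mul_of_nonneg_left hpb (by positivity)
  nlinarith

theorem add_smul_mem_frSubdiff_mul {φ Φ : E → EReal} {ψ : E → ℝ} {x ξ w : E}
    (hφ : ∀ z, 0 ≤ φ z) (hφx : φ x ≠ ⊤) (hψx : 0 < ψ x) (hψ : HasGradientAt ψ w x)
    (hΦ : ∀ᶠ z in 𝓝 x, Φ z = φ z * (ψ z : EReal)) (hξ : ξ ∈ frSubdiff φ x) :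
    ψ x • ξ + (φ x).toReal • w ∈ frSubdiff Φ x := by
  set a := (φ x).toReal
  set b := ψ x
  have hφx' : φ x = (a : EReal) :=
    (EReal.coe_toReal hφx (ne_bot_of_le_ne_bot (by simp) (hφ x))).symm
  have ha : 0 ≤ a := by exact_mod_cast hφx' ▸ hφ x
  have hΦx : Φ x = ((a * b : ℝ) : EReal) := by rw [hΦ.self_of_nhds, hφx', EReal.coe_mul]
  rw [mem_frSubdiff_iff_s6 (hΦx ▸ EReal.coe_ne_top _) (hΦx ▸ EReal.coe_ne_bot _), hΦx,
    EReal.toReal_coe]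
  rw [mem_frSubdiff_iff_s6 hφx (by simp [hφx'])] at hξ
  intro ε hε
  set ε' := ε / (a + b + 2)
  have hε' : 0 < ε' := by positivity
  have hψ_close : ∀ᶠ z in 𝓝 x, |ψ z - b| < min b (min 1 (ε' / (‖ξ‖ + 1))) :=
    Metric.tendsto_nhds.1 hψ.differentiableAt.continuousAt _ (by positivity)
  filter_upwards [hξ ε' hε', hasGradientAt_iff_isLittleO.1 hψ |>.def hε', hψ_close, hΦ]
    with z hφz hψz hbz hΦz
  rw [Real.norm_eq_abs, abs_le] at hψz
  obtain ⟨hb₁, hb₂, hb₃⟩ : |ψ z - b| < b ∧ |ψ z - b| < 1 ∧ |ψ z - b| < ε' / (‖ξ‖ + 1) := by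
    simpa only [lt_min_iff] using hbz
  have hpos : 0 < ψ z := by linarith [(abs_lt.1 hb₁).1]
  induction hφz' : φ z using EReal.rec with
  | bot => exact absurd hφz' (ne_bot_of_le_ne_bot (by simp) (hφ z))
  | top => simp [hΦz, hφz', EReal.top_mul_coe_of_pos hpos]
  | coe r =>
    rw [hΦz, hφz', ← EReal.coe_mul, EReal.coe_le_coe_iff, inner_add_left, real_inner_smul_left,
      real_inner_smul_left]
    rw [hφz', EReal.coe_le_coe_iff] at hφz
    have hc : |⟪ξ, z - x⟫ * (ψ z - b)| ≤ ε' * ‖z - x‖ := calc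
      |⟪ξ, z - x⟫ * (ψ z - b)| ≤ (‖ξ‖ * ‖z - x‖) * (ε' / (‖ξ‖ + 1)) := by
        rw [abs_mul]
        exact mul_le_mul (abs_real_inner_le_norm _ _) hb₃.le (abs_nonneg _) (by positivity)
      _ = ε' * ‖z - x‖ * (‖ξ‖ / (‖ξ‖ + 1)) := by ring
      _ ≤ ε' * ‖z - x‖ :=
        mul_le_of_le_one_right (by positivity) ((div_le_one (by positivity)).2 (by linarith))
    have := mul_lower_bound_of_approx (d := ⟪w, z - x⟫) ha hpos (by linarith [(abs_lt.1 hb₂).2])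
      (norm_nonneg _) hε'.le hφz (by linarith) (neg_le_of_abs_le hc)
    rwa [div_mul_cancel₀ ε (by positivity)] at this

end ProductRule

section Conjugate

variable {g : E → ℝ}

lemma coe_inner_sub_le_fconj (g : E → ℝ) (x y : E) :
    ((⟪x, y⟫ - g x : ℝ) : EReal) ≤ fconj g y :=
  EReal.coe_sub _ _ ▸ le_iSup (fun z => ((⟪z, y⟫ : ℝ) : EReal) - ((g z : ℝ) : EReal)) x

lemma fconj_ne_bot (g : E → ℝ) (y : E) : fconj g y ≠ ⊥ :=
  ne_bot_of_le_ne_bot (EReal.coe_ne_bot _) (coe_inner_sub_le_fconj g 0 y)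

lemma eta_le (g : E → ℝ) (x y : E) : eta g x y ≤ (g x : EReal) := by
  induction hy : fconj g y using EReal.rec with
  | bot => exact absurd hy (fconj_ne_bot g y)
  | top => simp [eta, hy]
  | coe r =>
    have := coe_inner_sub_le_fconj g x y
    rw [hy, EReal.coe_le_coe_iff] at this
    rw [eta, hy, ← EReal.coe_sub, EReal.coe_le_coe_iff]
    linarith

lemma eta_eq_coe {x y : E} (hy : fconj g y ≠ ⊤) :
    eta g x y = ((⟪x, y⟫ - (fconj g y).toReal : ℝ) : EReal) := by
  rw [eta, ← EReal.coe_toReal hy (fconj_ne_bot g y), EReal.toReal_coe, EReal.coe_sub]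

lemma fconj_ne_top_of_eta_pos {x y : E} (he : 0 < eta g x y) : fconj g y ≠ ⊤ := by
  intro hy
  simp [eta, hy] at he

lemma toReal_eta_pos {x y : E} (he : 0 < eta g x y) : 0 < (eta g x y).toReal :=
  EReal.toReal_pos he (eta_eq_coe (fconj_ne_top_of_eta_pos he) ▸ EReal.coe_ne_top _)

lemma toReal_eta_le {x y : E} (he : 0 < eta g x y) : (eta g x y).toReal ≤ g x := by
  simpa using EReal.toReal_le_toReal (eta_le g x y) (ne_bot_of_gt he) (EReal.coe_ne_top _)

variable [CompleteSpace E]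

lemma _root_.ConvexOn.add_inner_gradient_le (hg : ConvexOn ℝ univ g) {x : E}
    (hd : DifferentiableAt ℝ g x) (z : E) : g x + ⟪gradient g x, z - x⟫ ≤ g z := by
  let L : ℝ →ᵃ[ℝ] E := AffineMap.lineMap x z
  have hg' : HasFDerivAt g (fderiv ℝ g x) (L 0) := by
    rw [AffineMap.lineMap_apply_zero]
    exact hd.hasFDerivAt
  have hline : HasDerivAt (g ∘ L) (fderiv ℝ g x (z - x)) 0 :=
    hg'.comp_hasDerivAt 0 AffineMap.hasDerivAt_lineMap
  have := (hg.comp_affineMap L).le_slope_of_hasDerivAt (mem_univ 0) (mem_univ 1) one_pos hline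
  rw [slope_def_field, Function.comp_apply, Function.comp_apply, AffineMap.lineMap_apply_one,
    AffineMap.lineMap_apply_zero, sub_zero, div_one] at this
  rw [inner_gradient_left]
  linarith

lemma fconj_gradient (hg : ConvexOn ℝ univ g) {x : E} (hd : DifferentiableAt ℝ g x) :
    fconj g (gradient g x) = ((⟪x, gradient g x⟫ - g x : ℝ) : EReal) := by
  refine le_antisymm (iSup_le fun z => ?_) (coe_inner_sub_le_fconj g x _)
  rw [← EReal.coe_sub, EReal.coe_le_coe_iff]
  have := hg.add_inner_gradient_le hd z
  rw [inner_sub_right, real_inner_comm z, real_inner_comm x] at this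
  linarith

lemma eta_gradient (hg : ConvexOn ℝ univ g) {x : E} (hd : DifferentiableAt ℝ g x) :
    eta g x (gradient g x) = (g x : EReal) := by
  rw [eta, fconj_gradient hg hd, ← EReal.coe_sub, sub_sub_cancel]

lemma mem_cvxSubdiffE_fconj_gradient (hg : ConvexOn ℝ univ g) {x : E}
    (hd : DifferentiableAt ℝ g x) : x ∈ cvxSubdiffE (fconj g) (gradient g x) := by
  intro z
  refine le_trans (le_of_eq ?_) (coe_inner_sub_le_fconj g x z)
  rw [fconj_gradient hg hd, ← EReal.coe_add, inner_sub_right]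
  ring_nf

end Conjugate

lemma CalmAt.tendsto_toReal {X : Type*} [NormedAddCommGroup X] {φ : X → EReal} {y : X} {ys : ℕ → X}
    (hφ : CalmAt φ y (edom φ)) (hy : y ∈ edom φ) (hys : Tendsto ys atTop (𝓝 y))
    (hys_dom : ∀ k, ys k ∈ edom φ) (hφ_bot : ∀ z, φ z ≠ ⊥) :
    Tendsto (fun k => (φ (ys k)).toReal) atTop (𝓝 (φ y).toReal) := by
  obtain ⟨κ, -, B, hB, hcalm⟩ := hφ
  have hbound : ∀ᶠ k in atTop, |(φ (ys k)).toReal - (φ y).toReal| ≤ κ * ‖ys k - y‖ := by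
    filter_upwards [hys.eventually_mem hB] with k hk
    obtain ⟨h₁, h₂⟩ := hcalm (ys k) ⟨hk, hys_dom k⟩
    rw [← EReal.coe_toReal (hys_dom k) (hφ_bot _), ← EReal.coe_toReal hy (hφ_bot _),
      ← EReal.coe_add, EReal.coe_le_coe_iff] at h₁
    rw [← EReal.coe_toReal (hys_dom k) (hφ_bot _), ← EReal.coe_toReal hy (hφ_bot _),
      ← EReal.coe_add, EReal.coe_le_coe_iff] at h₂
    rw [abs_le]
    constructor <;> linarith
  have hlim : Tendsto (fun k => κ * ‖ys k - y‖) atTop (𝓝 0) := by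
    simpa using (tendsto_iff_norm_sub_tendsto_zero.1 hys).const_mul κ
  exact tendsto_iff_norm_sub_tendsto_zero.2 <| squeeze_zero' (Eventually.of_forall
    fun _ => norm_nonneg _) (by simpa only [Real.norm_eq_abs] using hbound) hlim

section ProductSpace

variable {V : Type*} [NormedAddCommGroup V]

lemma norm_mk2_zero (u : V) : ‖mk2 u (0 : V)‖ = ‖u‖ := WithLp.norm_toLp_fst 2 V V u

lemma norm_pr1_le (p : WithLp 2 (V × V)) : ‖pr1 p‖ ≤ ‖p‖ := WithLp.norm_fst_le V p

lemma pr1_sub (p q : WithLp 2 (V × V)) : pr1 (p - q) = pr1 p - pr1 q := rfl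

lemma mk2_sub_mk2 (a b c d : V) : mk2 a b - mk2 c d = mk2 (a - c) (b - d) := rfl

lemma continuous_pr1 : Continuous (pr1 : WithLp 2 (V × V) → V) := WithLp.continuous_fst 2 V V

lemma continuous_pr2 : Continuous (pr2 : WithLp 2 (V × V) → V) := WithLp.continuous_snd 2 V V

lemma continuous_mk2 : Continuous (fun q : V × V => mk2 q.1 q.2) :=
  WithLp.prod_continuous_toLp 2 V V

lemma tendsto_mk2 {l : Filter ℕ} {a b : ℕ → V} {x y : V} (ha : Tendsto a l (𝓝 x))
    (hb : Tendsto b l (𝓝 y)) : Tendsto (fun k => mk2 (a k) (b k)) l (𝓝 (mk2 x y)) :=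
  (continuous_mk2.tendsto (x, y)).comp (ha.prodMk_nhds hb)

lemma infEDist_zero_eq_of_maps {S : Set V} {T : Set (WithLp 2 (V × V))}
    (hST : ∀ u ∈ S, mk2 u 0 ∈ T) (hTS : ∀ p ∈ T, pr1 p ∈ S) :
    Metric.infEDist 0 S = Metric.infEDist 0 T := by
  refine le_antisymm (Metric.le_infEDist.2 fun p hp => ?_) (Metric.le_infEDist.2 fun u hu => ?_)
  · refine (Metric.infEDist_le_edist_of_mem (hTS p hp)).trans ?_
    rw [edist_zero_left, edist_zero_left]
    exact_mod_cast norm_pr1_le p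
  · refine (Metric.infEDist_le_edist_of_mem (hST u hu)).trans_eq ?_
    rw [edist_zero_left, edist_zero_left]
    exact congrArg _ (NNReal.eq (norm_mk2_zero u))

end ProductSpace

lemma inner_mk2_mk2 (a b c d : E) : ⟪mk2 a b, mk2 c d⟫ = ⟪a, c⟫ + ⟪b, d⟫ := rfl

lemma inner_mk2_zero_left (u : E) (p : WithLp 2 (E × E)) : ⟪mk2 u 0, p⟫ = ⟪u, pr1 p⟫ := by
  rw [WithLp.prod_inner_apply]
  exact add_eq_left.2 (inner_zero_left _)

section Gradient

variable [CompleteSpace E]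

lemma hasGradientAt_inner_sub_const (y : E) (r : ℝ) (x : E) :
    HasGradientAt (fun z => ⟪z, y⟫ - r) y x := by
  have hfun : (fun z => ⟪z, y⟫ - r) = fun z => innerSL ℝ y z - r := by
    ext z; simp [real_inner_comm]
  rw [hasGradientAt_iff_hasFDerivAt, hfun]
  exact (((innerSL ℝ y).hasFDerivAt (x := x)).sub_const r).congr_fderiv (by ext z; simp)

lemma _root_.HasGradientAt.inv {g : E → ℝ} {w x : E} (hg : HasGradientAt g w x) (hx : g x ≠ 0) :
    HasGradientAt (fun z => (g z)⁻¹) (-(g x ^ 2)⁻¹ • w) x := by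
  rw [hasGradientAt_iff_hasFDerivAt] at hg ⊢
  exact ((hasDerivAt_inv hx).comp_hasFDerivAt x hg).congr_fderiv (by ext v; simp)

end Gradient

section Objectives

section

variable {X : Type*} {f : X → EReal} {g h : X → ℝ}

lemma zeta_eq_coe {x : X} (hfx : f x ≠ ⊤) (hfx' : f x ≠ ⊥) :
    zeta f h x = (((f x).toReal + h x : ℝ) : EReal) := by
  rw [zeta, ← EReal.coe_toReal hfx hfx', EReal.toReal_coe, EReal.coe_add]

lemma zeta_nonneg (hζ : ∀ z, f z ≠ ⊤ → 0 ≤ zeta f h z) (x : X) : 0 ≤ zeta f h x := by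
  by_cases hfx : f x = ⊤
  · simp [zeta, hfx]
  · exact hζ x hfx

lemma ne_bot_of_zeta_nonneg {x : X} (hx : 0 ≤ zeta f h x) : f x ≠ ⊥ := by
  intro hfx
  rw [zeta, hfx, EReal.bot_add] at hx
  exact absurd hx (by simp)

lemma zeta_eq_coe_of_nonneg (hζ : ∀ z, f z ≠ ⊤ → 0 ≤ zeta f h z) {x : X} (hfx : f x ≠ ⊤) :
    zeta f h x = (((f x).toReal + h x : ℝ) : EReal) :=
  zeta_eq_coe hfx (ne_bot_of_zeta_nonneg (hζ x hfx))

lemma toReal_add_nonneg (hζ : ∀ z, f z ≠ ⊤ → 0 ≤ zeta f h z) {x : X} (hfx : f x ≠ ⊤) :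
    0 ≤ (f x).toReal + h x := by
  exact_mod_cast zeta_eq_coe_of_nonneg hζ hfx ▸ hζ x hfx

lemma Ffun_ne_top_iff {x : X} : Ffun f g h x ≠ ⊤ ↔ g x ≠ 0 ∧ f x ≠ ⊤ := by
  unfold Ffun
  split_ifs with hx <;> simp [hx]

lemma Ffun_ne_bot (x : X) : Ffun f g h x ≠ ⊥ := by
  unfold Ffun; split_ifs <;> simp

lemma Ffun_eq_coe {x : X} (hgx : g x ≠ 0) (hfx : f x ≠ ⊤) :
    Ffun f g h x = ((((f x).toReal + h x) / g x : ℝ) : EReal) :=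
  if_pos ⟨hgx, hfx⟩

lemma tendsto_Ffun (hζ : ∀ z, f z ≠ ⊤ → 0 ≤ zeta f h z) {xs : ℕ → X} {x : X}
    (hFx : Ffun f g h x ≠ ⊤) (hFxs : ∀ k, Ffun f g h (xs k) ≠ ⊤)
    (hg : Tendsto (fun k => g (xs k)) atTop (𝓝 (g x)))
    (hζlim : Tendsto (fun k => (zeta f h (xs k)).toReal) atTop (𝓝 ((Ffun f g h x).toReal * g x))) :
    Tendsto (fun k => Ffun f g h (xs k)) atTop (𝓝 (Ffun f g h x)) := by
  have hgx := (Ffun_ne_top_iff.1 hFx).1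
  have hlim := hζlim.div hg hgx
  rw [mul_div_cancel_right₀ _ hgx] at hlim
  rw [← EReal.coe_toReal hFx (Ffun_ne_bot x)]
  refine (EReal.tendsto_coe.2 hlim).congr fun k => ?_
  obtain ⟨hgk, hfk⟩ := Ffun_ne_top_iff.1 (hFxs k)
  rw [Pi.div_apply, Ffun_eq_coe hgk hfk, zeta_eq_coe_of_nonneg hζ hfk,
    EReal.toReal_coe]

end

variable {f : E → EReal} {g h : E → ℝ}

lemma Qfun_ne_top_iff {x y : E} : Qfun f g h x y ≠ ⊤ ↔ f x ≠ ⊤ ∧ 0 < eta g x y := by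
  unfold Qfun
  split_ifs with hx <;> simp [hx]

lemma Qfun_eq_coe {x y : E} (hfx : f x ≠ ⊤) (he : 0 < eta g x y) :
    Qfun f g h x y = ((((f x).toReal + h x) / (eta g x y).toReal : ℝ) : EReal) :=
  if_pos ⟨hfx, he⟩

lemma Qfun_nonneg (hζ : ∀ z, f z ≠ ⊤ → 0 ≤ zeta f h z) (x y : E) :
    0 ≤ Qfun f g h x y := by
  by_cases hQ : Qfun f g h x y = ⊤
  · simp [hQ]
  obtain ⟨hfx, he⟩ := Qfun_ne_top_iff.1 hQ
  rw [Qfun_eq_coe hfx he, EReal.coe_nonneg]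
  exact div_nonneg (toReal_add_nonneg hζ hfx) (EReal.toReal_nonneg he.le)

lemma Ffun_le_Qfun (hζ : ∀ z, f z ≠ ⊤ → 0 ≤ zeta f h z) (x y : E) :
    Ffun f g h x ≤ Qfun f g h x y := by
  by_cases hQ : Qfun f g h x y = ⊤
  · simp [hQ]
  obtain ⟨hfx, he⟩ := Qfun_ne_top_iff.1 hQ
  have hη := toReal_eta_pos he
  have hηg := toReal_eta_le he
  rw [Ffun_eq_coe (hη.trans_le hηg).ne' hfx, Qfun_eq_coe hfx he, EReal.coe_le_coe_iff]
  exact div_le_div_of_nonneg_left (toReal_add_nonneg hζ hfx) hη hηg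

lemma pos_of_Qfun_ne_top {x y : E} (hQ : Qfun f g h x y ≠ ⊤) : 0 < g x :=
  have he := (Qfun_ne_top_iff.1 hQ).2
  (toReal_eta_pos he).trans_le (toReal_eta_le he)

lemma Qfun_gradient [CompleteSpace E] (hg : ConvexOn ℝ univ g) {x : E} (hgx : 0 < g x)
    (hd : DifferentiableAt ℝ g x) : Qfun f g h x (gradient g x) = Ffun f g h x := by
  rw [Qfun, Ffun, eta_gradient hg hd, EReal.toReal_coe]
  simp [hgx, hgx.ne']

lemma toReal_zeta_eq_mul (hζ : ∀ z, f z ≠ ⊤ → 0 ≤ zeta f h z) {x y : E}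
    (hQ : Qfun f g h x y ≠ ⊤) :
    (zeta f h x).toReal = (Qfun f g h x y).toReal * (eta g x y).toReal := by
  obtain ⟨hfx, he⟩ := Qfun_ne_top_iff.1 hQ
  rw [Qfun_eq_coe hfx he, EReal.toReal_coe, div_mul_cancel₀ _ (toReal_eta_pos he).ne',
    zeta_eq_coe_of_nonneg hζ hfx, EReal.toReal_coe]

end Objectives

section FrechetTransfer

lemma mk2_zero_mem_frSubdiff_of_le {φ : WithLp 2 (E × E) → EReal} {F : E → EReal}
    {p₀ : WithLp 2 (E × E)} {u : E} (hle : ∀ p, F (pr1 p) ≤ φ p) (heq : φ p₀ = F (pr1 p₀))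
    (hF : F (pr1 p₀) ≠ ⊥) (hu : u ∈ frSubdiff F (pr1 p₀)) :
    mk2 u 0 ∈ frSubdiff φ p₀ := by
  have hFx : F (pr1 p₀) ≠ ⊤ := hu.1
  rw [mem_frSubdiff_iff_s6 hFx hF] at hu
  rw [mem_frSubdiff_iff_s6 (heq ▸ hFx) (heq ▸ hF), heq]
  intro ε hε
  filter_upwards [continuous_pr1.continuousAt.eventually (hu ε hε)] with p hp
  refine le_trans ?_ (hp.trans (hle p))
  rw [inner_mk2_zero_left, pr1_sub, EReal.coe_le_coe_iff]
  have : ‖pr1 p - pr1 p₀‖ ≤ ‖p - p₀‖ := norm_pr1_le (p - p₀)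
  nlinarith

lemma mem_frSubdiff_slice {φ : WithLp 2 (E × E) → EReal} {x y u v : E}
    (hφ : φ (mk2 x y) ≠ ⊥) (huv : mk2 u v ∈ frSubdiff φ (mk2 x y)) :
    u ∈ frSubdiff (fun z => φ (mk2 z y)) x := by
  have hφ' : φ (mk2 x y) ≠ ⊤ := huv.1
  rw [mem_frSubdiff_iff_s6 hφ' hφ] at huv
  rw [mem_frSubdiff_iff_s6 (φ := fun z => φ (mk2 z y)) hφ' hφ]
  intro ε hε
  have hslice : Tendsto (fun z => mk2 z y) (𝓝 x) (𝓝 (mk2 x y)) :=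
    (continuous_mk2.comp (continuous_id.prodMk continuous_const)).tendsto x
  filter_upwards [hslice.eventually (huv ε hε)] with z hz
  rwa [mk2_sub_mk2, inner_mk2_mk2, sub_self, inner_zero_right, add_zero, norm_mk2_zero] at hz

end FrechetTransfer

section ProductRuleApplications

variable [CompleteSpace E] {f : E → EReal} {g h : E → ℝ}

lemma smul_add_smul_mem_frSubdiff_zeta (hζ : ∀ z, f z ≠ ⊤ → 0 ≤ zeta f h z)
    {x y u v : E} (huv : mk2 u v ∈ frSubdiff (Qpair f g h) (mk2 x y)) :
    (eta g x y).toReal • u + (Qfun f g h x y).toReal • y ∈ frSubdiff (zeta f h) x := by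
  obtain ⟨hfx, he⟩ := Qfun_ne_top_iff.1 huv.1
  set r := (fconj g y).toReal
  have heta : ∀ z, eta g z y = ((⟪z, y⟫ - r : ℝ) : EReal) :=
    fun z => eta_eq_coe (fconj_ne_top_of_eta_pos he)
  have hψx : 0 < ⟪x, y⟫ - r := by exact_mod_cast heta x ▸ he
  have hagree : ∀ᶠ z in 𝓝 x, zeta f h z = Qfun f g h z y * ((⟪z, y⟫ - r : ℝ) : EReal) := by
    have hψ : Continuous fun z : E => ⟪z, y⟫ - r := by fun_prop
    filter_upwards [hψ.continuousAt.eventually (lt_mem_nhds hψx)] with z (hz : 0 < ⟪z, y⟫ - r)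
    have hez : 0 < eta g z y := heta z ▸ EReal.coe_pos.2 hz
    by_cases hfz : f z = ⊤
    · rw [zeta, hfz, EReal.top_add_coe, Qfun, if_neg (fun hc => hc.1 hfz),
        EReal.top_mul_coe_of_pos hz]
    · rw [zeta_eq_coe_of_nonneg hζ hfz, Qfun_eq_coe hfz hez, heta z, EReal.toReal_coe,
        ← EReal.coe_mul, div_mul_cancel₀ _ hz.ne']
  have := add_smul_mem_frSubdiff_mul (Qfun_nonneg hζ · y) huv.1 hψx
    (hasGradientAt_inner_sub_const y r x) hagree
    (mem_frSubdiff_slice (Qfun_nonneg hζ x y |>.trans_lt' EReal.bot_lt_zero).ne' huv)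
  rwa [heta x, EReal.toReal_coe]

lemma smul_add_smul_mem_frSubdiff_Ffun (hζ : ∀ z, f z ≠ ⊤ → 0 ≤ zeta f h z) {x ξ : E}
    (hgx : 0 < g x) (hd : DifferentiableAt ℝ g x) (hξ : ξ ∈ frSubdiff (zeta f h) x) :
    (g x)⁻¹ • ξ + (zeta f h x).toReal • (-(g x ^ 2)⁻¹ • gradient g x) ∈
      frSubdiff (Ffun f g h) x := by
  have hagree : ∀ᶠ z in 𝓝 x, Ffun f g h z = zeta f h z * (((g z)⁻¹ : ℝ) : EReal) := by
    filter_upwards [hd.continuousAt.eventually (lt_mem_nhds hgx)] with z hz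
    by_cases hfz : f z = ⊤
    · rw [Ffun, if_neg (fun hc => hc.2 hfz), zeta, hfz, EReal.top_add_coe,
        EReal.top_mul_coe_of_pos (inv_pos.2 hz)]
    · rw [Ffun_eq_coe hz.ne' hfz, zeta_eq_coe_of_nonneg hζ hfz, ← EReal.coe_mul, div_eq_mul_inv]
  have hψ : HasGradientAt (fun z => (g z)⁻¹) (-(g x ^ 2)⁻¹ • gradient g x) x :=
    hd.hasGradientAt.inv hgx.ne'
  exact add_smul_mem_frSubdiff_mul (ψ := fun z => (g z)⁻¹) (zeta_nonneg hζ) hξ.1 (inv_pos.2 hgx)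
    hψ hagree hξ

lemma mem_frSubdiff_Ffun_of_mem_frSubdiff_Qpair (hζ : ∀ z, f z ≠ ⊤ → 0 ≤ zeta f h z)
    {x y u v : E} (hd : DifferentiableAt ℝ g x)
    (huv : mk2 u v ∈ frSubdiff (Qpair f g h) (mk2 x y)) :
    (g x)⁻¹ • ((eta g x y).toReal • u + (Qfun f g h x y).toReal • y) +
      (zeta f h x).toReal • (-(g x ^ 2)⁻¹ • gradient g x) ∈ frSubdiff (Ffun f g h) x :=
  smul_add_smul_mem_frSubdiff_Ffun hζ (pos_of_Qfun_ne_top huv.1) hd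
    (smul_add_smul_mem_frSubdiff_zeta hζ huv)

end ProductRuleApplications

section LimitingSubdifferentials

variable [CompleteSpace E] {f : E → EReal} {g h : E → ℝ}

lemma mk2_zero_mem_limSubdiff_Qpair (hζ : ∀ z, f z ≠ ⊤ → 0 ≤ zeta f h z)
    (hg : ConvexOn ℝ univ g) (hg₀ : ∀ z, 0 ≤ g z)
    (hgdiff : ∀ z, g z ≠ 0 → DifferentiableAt ℝ g z)
    (hgrad : ContinuousOn (gradient g) {z | g z ≠ 0}) {x u : E} (hgx : g x ≠ 0)
    (hu : u ∈ limSubdiff (Ffun f g h) x) :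
    mk2 u 0 ∈ limSubdiff (Qpair f g h) (mk2 x (gradient g x)) := by
  obtain ⟨xs, us, hxs, hF, hus_mem, hus⟩ := hu
  have hQ_eq : ∀ z, g z ≠ 0 → Qpair f g h (mk2 z (gradient g z)) = Ffun f g h z :=
    fun z hz => Qfun_gradient hg ((hg₀ z).lt_of_ne' hz) (hgdiff z hz)
  have hgxs : ∀ k, g (xs k) ≠ 0 := fun k => (Ffun_ne_top_iff.1 (hus_mem k).1).1
  have hgrad_xs : Tendsto (fun k => gradient g (xs k)) atTop (𝓝 (gradient g x)) :=
    ((hgrad.continuousAt ((hgdiff x hgx).continuousAt.eventually_ne hgx)).tendsto).comp hxs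
  refine ⟨fun k => mk2 (xs k) (gradient g (xs k)), fun k => mk2 (us k) 0,
    tendsto_mk2 hxs hgrad_xs, ?_, fun k => ?_, tendsto_mk2 hus tendsto_const_nhds⟩
  · simpa only [hQ_eq _ (hgxs _), hQ_eq x hgx] using hF
  · exact mk2_zero_mem_frSubdiff_of_le (fun p => Ffun_le_Qfun hζ _ _) (hQ_eq _ (hgxs k))
      (Ffun_ne_bot _) (hus_mem k)

lemma tendsto_toReal_eta (hg : ConvexOn ℝ univ g) {x : E} (hd : DifferentiableAt ℝ g x)
    (hcalm : CalmAt (fconj g) (gradient g x) (edom (fconj g))) {xs ys : ℕ → E}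
    (hxs : Tendsto xs atTop (𝓝 x)) (hys : Tendsto ys atTop (𝓝 (gradient g x)))
    (he : ∀ k, 0 < eta g (xs k) (ys k)) :
    Tendsto (fun k => (eta g (xs k) (ys k)).toReal) atTop (𝓝 (g x)) := by
  have hdom : gradient g x ∈ edom (fconj g) := by
    rw [edom, mem_ofPred, fconj_gradient hg hd]
    exact EReal.coe_ne_top _
  have hconj := hcalm.tendsto_toReal hdom hys (fun k => fconj_ne_top_of_eta_pos (he k))
    (fconj_ne_bot g)
  have := (hxs.inner hys).sub hconj
  rw [fconj_gradient hg hd, EReal.toReal_coe, sub_sub_cancel] at this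
  refine this.congr fun k => ?_
  rw [eta_eq_coe (fconj_ne_top_of_eta_pos (he k)), EReal.toReal_coe]

lemma pr1_mem_limSubdiff_Ffun (hζ : ∀ z, f z ≠ ⊤ → 0 ≤ zeta f h z) (hg : ConvexOn ℝ univ g)
    (hgdiff : ∀ z, g z ≠ 0 → DifferentiableAt ℝ g z)
    (hgrad : ContinuousOn (gradient g) {z | g z ≠ 0}) {x : E} (hgx : 0 < g x) (hfx : f x ≠ ⊤)
    (hcalm : CalmAt (fconj g) (gradient g x) (edom (fconj g))) {p : WithLp 2 (E × E)}
    (hp : p ∈ limSubdiff (Qpair f g h) (mk2 x (gradient g x))) :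
    pr1 p ∈ limSubdiff (Ffun f g h) x := by
  obtain ⟨P, V, hP, hQ, hV_mem, hV⟩ := hp
  set xs := fun k => pr1 (P k)
  set ys := fun k => pr2 (P k)
  set η := fun k => (eta g (xs k) (ys k)).toReal
  set q := fun k => (Qfun f g h (xs k) (ys k)).toReal
  set ζ := fun k => (zeta f h (xs k)).toReal
  have hQk : ∀ k, Qfun f g h (xs k) (ys k) ≠ ⊤ := fun k => (hV_mem k).1
  have hgxs : ∀ k, 0 < g (xs k) := fun k => pos_of_Qfun_ne_top (hQk k)
  have hw_mem := fun k => mem_frSubdiff_Ffun_of_mem_frSubdiff_Qpair hζ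
    (hgdiff _ (hgxs k).ne') (hV_mem k)
  have hd := hgdiff x hgx.ne'
  have hxs : Tendsto xs atTop (𝓝 x) := (continuous_pr1.tendsto _).comp hP
  have hys : Tendsto ys atTop (𝓝 (gradient g x)) := (continuous_pr2.tendsto _).comp hP
  have hus : Tendsto (fun k => pr1 (V k)) atTop (𝓝 (pr1 p)) := (continuous_pr1.tendsto _).comp hV
  have hg_xs : Tendsto (fun k => g (xs k)) atTop (𝓝 (g x)) := hd.continuousAt.tendsto.comp hxs
  have hgrad_xs : Tendsto (fun k => gradient g (xs k)) atTop (𝓝 (gradient g x)) :=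
    (hgrad.continuousAt (hd.continuousAt.eventually_ne hgx.ne')).tendsto.comp hxs
  have hη : Tendsto η atTop (𝓝 (g x)) :=
    tendsto_toReal_eta hg hd hcalm hxs hys fun k => (Qfun_ne_top_iff.1 (hQk k)).2
  have hFx : Ffun f g h x ≠ ⊤ := Ffun_ne_top_iff.2 ⟨hgx.ne', hfx⟩
  have hq : Tendsto q atTop (𝓝 (Ffun f g h x).toReal) := by
    rw [show Qpair f g h (mk2 x (gradient g x)) = Ffun f g h x from Qfun_gradient hg hgx hd] at hQ
    exact (EReal.tendsto_toReal hFx (Ffun_ne_bot x)).comp hQ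
  have hζlim : Tendsto ζ atTop (𝓝 ((Ffun f g h x).toReal * g x)) :=
    (hq.mul hη).congr fun k => (toReal_zeta_eq_mul hζ (hQk k)).symm
  refine ⟨xs, fun k => (g (xs k))⁻¹ • (η k • pr1 (V k) + q k • ys k) +
    ζ k • (-(g (xs k) ^ 2)⁻¹ • gradient g (xs k)), hxs,
    tendsto_Ffun hζ hFx (fun k => (hw_mem k).1) hg_xs hζlim, hw_mem, ?_⟩
  -- the two `∇g(x)` terms cancel in the limit
  have := ((hg_xs.inv₀ hgx.ne').smul ((hη.smul hus).add (hq.smul hys))).add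
    (hζlim.smul (((hg_xs.pow 2).inv₀ (by positivity)).neg.smul hgrad_xs))
  convert this using 2
  match_scalars <;> field_simp
  ring

end LimitingSubdifferentials

/-- When `g` is continuously differentiable on `Ω` and `g^*` is calm on its domain,
the subdifferential distances of `F` and `Q` agree along `y = ∇g(x)`. -/
theorem statement6 {n : ℕ} (f : EuclideanSpace ℝ (Fin n) → EReal)
    (g h : EuclideanSpace ℝ (Fin n) → ℝ) (hb : Blanket f g h)
    (hgdiff : ∀ x, g x ≠ 0 → DifferentiableAt ℝ g x)
    (hgradcont : ContinuousOn (gradient g) {x | g x ≠ 0})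
    (hcalm : CalmOn (fconj g) (edom (fconj g))) :
    ∀ x : EuclideanSpace ℝ (Fin n), Ffun f g h x ≠ ⊤ →
      eta g x (gradient g x) = ((g x : ℝ) : EReal) ∧
      x ∈ limSubdiff (fconj g) (gradient g x) ∧
      EMetric.infEdist (0 : EuclideanSpace ℝ (Fin n)) (limSubdiff (Ffun f g h) x) =
        EMetric.infEdist
          (0 : WithLp 2 (EuclideanSpace ℝ (Fin n) × EuclideanSpace ℝ (Fin n)))
          (limSubdiff (Qpair f g h) (mk2 x (gradient g x))) ∧
      ((0 : EuclideanSpace ℝ (Fin n)) ∈ limSubdiff (Ffun f g h) x ↔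
        (0 : WithLp 2 (EuclideanSpace ℝ (Fin n) × EuclideanSpace ℝ (Fin n))) ∈
          limSubdiff (Qpair f g h) (mk2 x (gradient g x))) := by
  intro x hx
  obtain ⟨hgx, hfx⟩ := Ffun_ne_top_iff.1 hx
  have hgx' : 0 < g x := (hb.g_nonneg x).lt_of_ne' hgx
  have hd := hgdiff x hgx
  have hconj : fconj g (gradient g x) ≠ ⊤ := by
    rw [fconj_gradient hb.g_convex hd]; exact EReal.coe_ne_top _
  have hFQ : ∀ u ∈ limSubdiff (Ffun f g h) x,
      mk2 u 0 ∈ limSubdiff (Qpair f g h) (mk2 x (gradient g x)) := fun _ hu =>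
    mk2_zero_mem_limSubdiff_Qpair hb.zeta_nonneg hb.g_convex hb.g_nonneg hgdiff hgradcont hgx hu
  have hQF : ∀ p ∈ limSubdiff (Qpair f g h) (mk2 x (gradient g x)),
      pr1 p ∈ limSubdiff (Ffun f g h) x := fun _ hp =>
    pr1_mem_limSubdiff_Ffun hb.zeta_nonneg hb.g_convex hgdiff hgradcont hgx' hfx
      (hcalm _ hconj) hp
  refine ⟨eta_gradient hb.g_convex hd, mem_limSubdiff_of_mem_frSubdiff
    (mem_frSubdiff_of_mem_cvxSubdiffE hconj (fconj_ne_bot g _)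
      (mem_cvxSubdiffE_fconj_gradient hb.g_convex hd)),
    infEDist_zero_eq_of_maps hFQ hQF, hFQ 0, hQF 0⟩

end Paper
end
end

section
/- Under the blanket assumptions, suppose the set O := {x ∈ ℝ^n: ζ(x) = 0 and g(x) = 0} is nonempty. If x⁰ ∈ ℝ^n satisfies F(x⁰) < inf{ liminf_{z→x} F(z) : x ∈ O }, then the level set X := {x ∈ ℝ^n: F(x) ≤ F(x⁰)} is closed. -/
open Filter Topology Set
open scoped RealInnerProductSpace Pointwise NNReal

noncomputable section

namespace Paper

variable {E : Type*} [NormedAddCommGroup E] [InnerProductSpace ℝ E]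

private lemma ffun_le_aux {n : ℕ} {f : EuclideanSpace ℝ (Fin n) → EReal}
    {g h : EuclideanSpace ℝ (Fin n) → ℝ} {x : EuclideanSpace ℝ (Fin n)} {c : ℝ}
    (hgn : 0 ≤ g x) (hx : Ffun f g h x ≤ (c : EReal)) :
    0 < g x ∧ f x ≠ ⊤ ∧ (f x).toReal + h x ≤ c * g x := by
  by_cases hcond : g x ≠ 0 ∧ f x ≠ ⊤
  · have hgpos : 0 < g x := lt_of_le_of_ne hgn (Ne.symm hcond.1)
    refine ⟨hgpos, hcond.2, ?_⟩
    rw [Ffun, if_pos hcond] at hx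
    exact (div_le_iff₀ hgpos).mp (EReal.coe_le_coe_iff.mp hx)
  · rw [Ffun, if_neg hcond] at hx
    exact absurd (top_le_iff.mp hx) (by simp)

/-- Closedness of the level set under a suitable initial point. -/
theorem statement9 {n : ℕ} (f : EuclideanSpace ℝ (Fin n) → EReal)
    (g h : EuclideanSpace ℝ (Fin n) → ℝ) (hb : Blanket f g h)
    (hO : {x : EuclideanSpace ℝ (Fin n) | zeta f h x = 0 ∧ g x = 0}.Nonempty)
    (x0 : EuclideanSpace ℝ (Fin n))
    (h0 : Ffun f g h x0 <
      ⨅ x ∈ {x : EuclideanSpace ℝ (Fin n) | zeta f h x = 0 ∧ g x = 0},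
        Filter.liminf (Ffun f g h) (𝓝 x)) :
    IsClosed {x : EuclideanSpace ℝ (Fin n) | Ffun f g h x ≤ Ffun f g h x0} := by
  have hgc : Continuous g := by
    exact continuousOn_univ.mp (hb.g_convex.continuousOn isOpen_univ)
  have hfbot : ∀ z, f z ≠ ⊥ := hb.f_proper.2
  have hFx0_lt_top : Ffun f g h x0 < ⊤ := lt_of_lt_of_le h0 le_top
  have hcond0 : g x0 ≠ 0 ∧ f x0 ≠ ⊤ := by
    by_contra hcond
    rw [Ffun, if_neg hcond] at hFx0_lt_top
    exact lt_irrefl _ hFx0_lt_top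
  set c : ℝ := ((f x0).toReal + h x0) / g x0 with hc
  have hF0 : Ffun f g h x0 = (c : EReal) := by rw [Ffun, if_pos hcond0]
  apply IsSeqClosed.isClosed
  intro u x hu hux
  simp only [Set.mem_setOf_eq] at hu ⊢
  rw [hF0] at hu ⊢
  have key : ∀ k, 0 < g (u k) ∧ f (u k) ≠ ⊤ ∧
      (f (u k)).toReal + h (u k) ≤ c * g (u k) :=
    fun k => ffun_le_aux (hb.g_nonneg _) (hu k)
  have hgt : Tendsto (fun k => g (u k)) atTop (𝓝 (g x)) := (hgc.tendsto x).comp hux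
  have hcgt : Tendsto (fun k => c * g (u k)) atTop (𝓝 (c * g x)) := hgt.const_mul c
  by_cases hgx : g x = 0
  · -- the limit lies in `O`, contradicting the choice of `x0`
    exfalso
    have hzle : f x ≠ ⊤ ∧ (f x).toReal + h x ≤ 0 := by
      by_contra hcon
      push_neg at hcon
      obtain ⟨a, b, hab, ha, hb'⟩ :
          ∃ a b : ℝ, 0 < a + b ∧ (a : EReal) < f x ∧ b < h x := by
        by_cases hft : f x = ⊤
        · exact ⟨1 - h x, h x - 1/2, by ring_nf; norm_num,
            hft ▸ EReal.coe_lt_top _, by linarith⟩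
        · have hs : 0 < (f x).toReal + h x := hcon hft
          refine ⟨(f x).toReal - ((f x).toReal + h x)/4, h x - ((f x).toReal + h x)/4,
            by linarith, ?_, by linarith⟩
          rw [← EReal.coe_toReal hft (hfbot x)]
          exact_mod_cast (by linarith : (f x).toReal - ((f x).toReal + h x)/4 < (f x).toReal)
      have E1 : ∀ᶠ k in atTop, a < (f (u k)).toReal := by
        filter_upwards [hux.eventually (hb.f_lsc x _ ha)] with k hk
        have : ((a : ℝ) : EReal) < (((f (u k)).toReal : ℝ) : EReal) := by
          rwa [EReal.coe_toReal (key k).2.1 (hfbot _)]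
        exact_mod_cast this
      have E2 : ∀ᶠ k in atTop, b < h (u k) := hux.eventually (hb.h_lsc x b hb')
      have E3 : ∀ᶠ k in atTop, c * g (u k) < a + b := by
        have h0' : Tendsto (fun k => c * g (u k)) atTop (𝓝 0) := by
          simpa [hgx] using hcgt
        exact h0'.eventually_lt_const hab
      obtain ⟨k, h1, h2, h3⟩ := (E1.and (E2.and E3)).exists
      have := (key k).2.2
      linarith
    have hz0 : zeta f h x = 0 := by
      have hge : (0 : EReal) ≤ zeta f h x := hb.zeta_nonneg x hzle.1
      have hle2 : zeta f h x ≤ 0 := by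
        rw [zeta, ← EReal.coe_toReal hzle.1 (hfbot x)]
        exact_mod_cast hzle.2
      exact le_antisymm hle2 hge
    have hmem : x ∈ {x : EuclideanSpace ℝ (Fin n) | zeta f h x = 0 ∧ g x = 0} :=
      ⟨hz0, hgx⟩
    have h1 : (⨅ y ∈ {x : EuclideanSpace ℝ (Fin n) | zeta f h x = 0 ∧ g x = 0},
        Filter.liminf (Ffun f g h) (𝓝 y)) ≤ Filter.liminf (Ffun f g h) (𝓝 x) :=
      iInf₂_le x hmem
    have h2 : Filter.liminf (Ffun f g h) (𝓝 x) ≤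
        Filter.liminf (fun k => Ffun f g h (u k)) atTop := by
      have := liminf_le_liminf_of_le (u := Ffun f g h) hux
      rwa [← liminf_comp (Ffun f g h) u atTop] at this
    have h3 : Filter.liminf (fun k => Ffun f g h (u k)) atTop ≤ (c : EReal) :=
      liminf_le_of_frequently_le' (Frequently.of_forall hu)
    rw [hF0] at h0
    exact lt_irrefl _ (lt_of_lt_of_le h0 (h1.trans (h2.trans h3)))
  · -- limit has `g x > 0`
    have hgpos : 0 < g x := lt_of_le_of_ne (hb.g_nonneg x) (Ne.symm hgx)
    have hhc : ContinuousAt h x := (hb.h_diff.1 x hgx).continuousAt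
    have hht : Tendsto (fun k => h (u k)) atTop (𝓝 (h x)) := hhc.tendsto.comp hux
    have hbd : Tendsto (fun k => c * g (u k) - h (u k)) atTop (𝓝 (c * g x - h x)) :=
      hcgt.sub hht
    have hfx_le : f x ≤ ((c * g x - h x : ℝ) : EReal) := by
      by_contra hlt
      push_neg at hlt
      obtain ⟨z, hz1, hz2⟩ := exists_between hlt
      have hzt : z ≠ ⊤ := (hz2.trans_le le_top).ne
      have hzb : z ≠ ⊥ := (hz1.trans' (by exact_mod_cast EReal.bot_lt_coe _)).ne'
      set t : ℝ := z.toReal with ht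
      have hzcoe : (t : EReal) = z := EReal.coe_toReal hzt hzb
      have ht1 : c * g x - h x < t := by
        rw [← hzcoe] at hz1; exact_mod_cast hz1
      have E1 : ∀ᶠ k in atTop, t < (f (u k)).toReal := by
        filter_upwards [hux.eventually (hb.f_lsc x _ (hzcoe ▸ hz2))] with k hk
        have : ((t : ℝ) : EReal) < (((f (u k)).toReal : ℝ) : EReal) := by
          rwa [EReal.coe_toReal (key k).2.1 (hfbot _)]
        exact_mod_cast this
      have E2 : ∀ᶠ k in atTop, c * g (u k) - h (u k) < t :=
        hbd.eventually_lt_const ht1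
      obtain ⟨k, hk1, hk2⟩ := (E1.and E2).exists
      have := (key k).2.2
      linarith
    have hfxt : f x ≠ ⊤ := (hfx_le.trans_lt (EReal.coe_lt_top _)).ne
    have hreal : (f x).toReal + h x ≤ c * g x := by
      have : (((f x).toReal : ℝ) : EReal) ≤ ((c * g x - h x : ℝ) : EReal) := by
        rwa [EReal.coe_toReal hfxt (hfbot x)]
      have := EReal.coe_le_coe_iff.mp this
      linarith
    rw [Ffun, if_pos ⟨hgx, hfxt⟩]
    exact_mod_cast (div_le_iff₀ hgpos).mpr hreal
end Paper
end
end

section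
/- Let g: ℝ^n → ℝ be convex, real-valued and nonnegative, with Fenchel conjugate g*, and set η(x,y) := ⟨x,y⟩ − g*(y). For any x, y ∈ ℝ^n and α > 0, let y⁺ := prox_{αg*}(y + αx) (which is a well-defined single point since g* is proper closed convex). Then: (i) (y − y⁺)/α + x ∈ ∂g*(y⁺); and (ii) η(x,y) + ‖y − y⁺‖₂²/α ≤ η(x,y⁺) ≤ g(x). -/
open Filter Topology Set
open scoped RealInnerProductSpace Pointwise NNReal

noncomputable section

namespace Paper

variable {E : Type*} [NormedAddCommGroup E] [InnerProductSpace ℝ E]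

/-- Basic properties of the proximal step on `g^*`. -/
theorem statement10 {n : ℕ} (g : EuclideanSpace ℝ (Fin n) → ℝ)
    (hconv : ConvexOn ℝ Set.univ g) (hnn : ∀ x, 0 ≤ g x)
    (x y : EuclideanSpace ℝ (Fin n)) (α : ℝ) (hα : 0 < α)
    (yp : EuclideanSpace ℝ (Fin n))
    (hyp : yp ∈ proxSet (scaleE α (fconj g)) (y + α • x)) :
    α⁻¹ • (y - yp) + x ∈ cvxSubdiffE (fconj g) yp ∧
    eta g x y + ((‖y - yp‖ ^ 2 / α : ℝ) : EReal) ≤ eta g x yp ∧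
    eta g x yp ≤ ((g x : ℝ) : EReal) := by
  set φ := fconj g with hφ
  set u := y + α • x with hu
  set d := α⁻¹ • (y - yp) + x with hd
  have hαd : α • d = u - yp := by
    rw [hd, smul_add, smul_smul, mul_inv_cancel₀ hα.ne', one_smul, hu]
    abel
  clear_value u d
  -- each term of the sup as a real coercion
  have hterm : ∀ (p v : EuclideanSpace ℝ (Fin n)),
      ((⟪p, v⟫ : ℝ) : EReal) - ((g p : ℝ) : EReal) = ((⟪p, v⟫ - g p : ℝ) : EReal) := by
    intro p v; rw [EReal.coe_sub]
  -- Fenchel-Young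
  have FY : ∀ (p v : EuclideanSpace ℝ (Fin n)), ((⟪p, v⟫ - g p : ℝ) : EReal) ≤ φ v := by
    intro p v
    rw [← hterm]
    exact le_iSup (fun q => ((⟪q, v⟫ : ℝ) : EReal) - ((g q : ℝ) : EReal)) p
  have hbot : ∀ v, φ v ≠ ⊥ := by
    intro v h
    have := FY 0 v
    rw [h] at this
    exact (EReal.coe_ne_bot _) (le_bot_iff.1 this)
  have h0le : φ 0 ≤ ((0 : ℝ) : EReal) := by
    refine iSup_le fun p => ?_
    rw [hterm, EReal.coe_le_coe_iff]
    have := hnn p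
    have : ⟪p, (0 : EuclideanSpace ℝ (Fin n))⟫ = 0 := inner_zero_right p
    linarith [hnn p]
  have h0top : φ 0 ≠ ⊤ := fun h => by simp [h] at h0le
  have h0val : φ 0 = (((φ 0).toReal : ℝ) : EReal) := (EReal.coe_toReal h0top (hbot 0)).symm
  -- yp has finite conjugate value
  have hyptop : φ yp ≠ ⊤ := by
    intro htop
    have h2 := hyp 0
    simp only [proxSet, scaleE, Set.mem_setOf_eq] at h2
    rw [htop, EReal.mul_top_of_pos (EReal.coe_pos.2 hα), EReal.top_add_coe,
      h0val, ← EReal.coe_mul, ← EReal.coe_add] at h2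
    exact (EReal.coe_lt_top _).not_ge h2
  set a := (φ yp).toReal with hA
  have ha : φ yp = ((a : ℝ) : EReal) := (EReal.coe_toReal hyptop (hbot yp)).symm
  clear_value a
  -- FY in real form
  have FYr : ∀ p, ⟪p, yp⟫ - g p ≤ a := by
    intro p
    have := FY p yp
    rw [ha, EReal.coe_le_coe_iff] at this
    exact this
  -- prox inequality in real form
  have hprox : ∀ (w : EuclideanSpace ℝ (Fin n)) (c : ℝ), φ w ≤ ((c : ℝ) : EReal) →
      α * a + ‖yp - u‖ ^ 2 / 2 ≤ α * c + ‖w - u‖ ^ 2 / 2 := by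
    intro w c hwc
    have hwtop : φ w ≠ ⊤ := fun h => by simp [h] at hwc
    have hwval : φ w = (((φ w).toReal : ℝ) : EReal) := (EReal.coe_toReal hwtop (hbot w)).symm
    have hbc : (φ w).toReal ≤ c := by
      rw [hwval, EReal.coe_le_coe_iff] at hwc; exact hwc
    have h2 := hyp w
    simp only [proxSet, scaleE, Set.mem_setOf_eq] at h2
    rw [ha, hwval, ← EReal.coe_mul, ← EReal.coe_mul, ← EReal.coe_add, ← EReal.coe_add,
      EReal.coe_le_coe_iff] at h2
    have : α * (φ w).toReal ≤ α * c := mul_le_mul_of_nonneg_left hbc hα.le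
    linarith
  -- the subgradient inequality in real form
  have subgrad : ∀ z : EuclideanSpace ℝ (Fin n), φ z ≠ ⊤ →
      a + ⟪d, z - yp⟫ ≤ (φ z).toReal := by
    intro z hztop
    set b := (φ z).toReal with hB
    have hb : φ z = ((b : ℝ) : EReal) := (EReal.coe_toReal hztop (hbot z)).symm
    clear_value b
    have FYz : ∀ p, ⟪p, z⟫ - g p ≤ b := by
      intro p
      have := FY p z
      rw [hb, EReal.coe_le_coe_iff] at this
      exact this
    set A := α * (b - a) + ⟪yp - u, z - yp⟫ with hAdef
    set M := ‖z - yp‖ ^ 2 / 2 with hM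
    have hMnn : 0 ≤ M := by rw [hM]; positivity
    clear_value A M
    have key : ∀ t : ℝ, 0 < t → t ≤ 1 → 0 ≤ A + t * M := by
      intro t ht0 ht1
      set w := yp + t • (z - yp) with hw
      have hconvw : φ w ≤ (((1 - t) * a + t * b : ℝ) : EReal) := by
        refine iSup_le fun p => ?_
        rw [hterm, EReal.coe_le_coe_iff]
        have h1 : ⟪p, w⟫ = ⟪p, yp⟫ + t * ⟪p, z - yp⟫ := by
          rw [hw, inner_add_right, real_inner_smul_right]
        have h2 : ⟪p, z - yp⟫ = ⟪p, z⟫ - ⟪p, yp⟫ := inner_sub_right p z yp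
        have h3 := FYr p
        have h4 := FYz p
        nlinarith [h3, h4, ht0.le, ht1]
      have h5 := hprox w _ hconvw
      have hexp : ‖w - u‖ ^ 2 = ‖yp - u‖ ^ 2 + 2 * (t * ⟪yp - u, z - yp⟫) + t ^ 2 * ‖z - yp‖ ^ 2 := by
        have : w - u = (yp - u) + t • (z - yp) := by rw [hw]; abel
        rw [this, norm_add_sq_real, real_inner_smul_right, norm_smul, Real.norm_eq_abs,
          mul_pow, sq_abs]
      rw [hexp] at h5
      have h6 : 0 ≤ t * A + t ^ 2 * M := by
        simp only [hAdef, hM]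
        nlinarith [h5]
      nlinarith [h6, ht0]
    have hAnn : 0 ≤ A := by
      by_contra hAneg
      push_neg at hAneg
      set t := min 1 ((-A) / (M + 1)) with htdef
      have ht0 : 0 < t := lt_min one_pos (div_pos (neg_pos.2 hAneg) (by linarith))
      have htM : t * (M + 1) ≤ -A := by
        have := min_le_right 1 ((-A) / (M + 1))
        calc t * (M + 1) ≤ ((-A) / (M + 1)) * (M + 1) :=
              mul_le_mul_of_nonneg_right this (by linarith)
          _ = -A := div_mul_cancel₀ _ (by linarith)
      have hk := key t ht0 (min_le_left _ _)
      have hexp2 : t * (M + 1) = t * M + t := by ring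
      linarith
    -- A ≥ 0 gives the subgradient inequality
    have hinner : ⟪yp - u, z - yp⟫ = -(α * ⟪d, z - yp⟫) := by
      have : u - yp = α • d := hαd.symm
      have h7 : ⟪u - yp, z - yp⟫ = α * ⟪d, z - yp⟫ := by
        rw [this, real_inner_smul_left]
      have h8 : ⟪yp - u, z - yp⟫ = -⟪u - yp, z - yp⟫ := by
        rw [← inner_neg_left]; congr 1; abel
      rw [h8, h7]
    obtain ⟨I, hI⟩ : ∃ I : ℝ, ⟪d, z - yp⟫ = I := ⟨_, rfl⟩
    rw [hAdef, hinner, hI] at hAnn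
    rw [hI]
    have h9 : 0 ≤ α * (b - a - I) := by linarith [hAnn]
    have h10 : α⁻¹ * (α * (b - a - I)) = b - a - I := by field_simp
    have h11 : 0 ≤ α⁻¹ * (α * (b - a - I)) := mul_nonneg (inv_nonneg.2 hα.le) h9
    linarith [h10 ▸ h11]
  -- part (i)
  have part1 : d ∈ cvxSubdiffE φ yp := by
    intro z
    by_cases hz : φ z = ⊤
    · rw [hz]; exact le_top
    · have hb : φ z = (((φ z).toReal : ℝ) : EReal) := (EReal.coe_toReal hz (hbot z)).symm
      rw [ha, hb, ← EReal.coe_add, EReal.coe_le_coe_iff]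
      exact subgrad z hz
  refine ⟨part1, ?_, ?_⟩
  -- part (ii)
  · by_cases hy : φ y = ⊤
    · have : eta g x y = ⊥ := by
        simp only [eta, ← hφ, hy]
        simp
      rw [this]
      simp
    · have hc : φ y = (((φ y).toReal : ℝ) : EReal) := (EReal.coe_toReal hy (hbot y)).symm
      set c := (φ y).toReal with hC
      clear_value c
      have hsg := subgrad y hy
      have hdyyp : ⟪d, y - yp⟫ = α⁻¹ * ‖y - yp‖ ^ 2 + ⟪x, y - yp⟫ := by
        rw [hd, inner_add_left, real_inner_smul_left, real_inner_self_eq_norm_sq]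
      rw [hdyyp] at hsg
      have hetay : eta g x y = ((⟪x, y⟫ - c : ℝ) : EReal) := by
        simp only [eta, ← hφ]; rw [hc, ← EReal.coe_sub]
      have hetayp : eta g x yp = ((⟪x, yp⟫ - a : ℝ) : EReal) := by
        simp only [eta, ← hφ]; rw [ha, ← EReal.coe_sub]
      rw [hetay, hetayp, ← EReal.coe_add, EReal.coe_le_coe_iff]
      have hinn : ⟪x, y - yp⟫ = ⟪x, y⟫ - ⟪x, yp⟫ := inner_sub_right x y yp
      have hdiv : ‖y - yp‖ ^ 2 / α = α⁻¹ * ‖y - yp‖ ^ 2 := by rw [div_eq_inv_mul]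
      linarith [hsg, hinn.symm.le, hinn.le]
  -- part (iii)
  · have hetayp : eta g x yp = ((⟪x, yp⟫ - a : ℝ) : EReal) := by
      simp only [eta, ← hφ]; rw [ha, ← EReal.coe_sub]
    rw [hetayp, EReal.coe_le_coe_iff]
    linarith [FYr x]

end Paper
end
end
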